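/- arXiv:1808.06747 — 3 statements merged into one kernel-verified Lean document; each statement's English description precedes it below -/
import Mathlib

section
/- Let X be a Banach lattice and X_a its order continuous part (the set of f ∈ X such that ‖f_α‖ → 0 whenever f_α →o 0 with |f_α| ≤ |f|). If (f_n) is a sequence in X_a that converges to 0 in the topology σ(X, X_n^~), then (f_n) converges weakly to 0 in X. -/
open Filter Topology Pointwise

noncomputable section

/-- A directed index type for nets. -/
structure DirectedType : Type 1 where
  ι : Type
  r : ι → ι → Prop
  nonempty : Nonempty ι
  refl : ∀ a, r a a
  trans : ∀ a b c, r a b → r b c → r a c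
  directed : ∀ a b, ∃ c, r a c ∧ r b c

/-- The natural numbers as a directed type (for sequences). -/
def natDir : DirectedType where
  ι := ℕ
  r := (· ≤ ·)
  nonempty := ⟨0⟩
  refl := fun _ => le_refl _
  trans := fun _ _ _ => le_trans
  directed := fun a b => ⟨max a b, le_max_left _ _, le_max_right _ _⟩

/-- A real valued net tends to zero. -/
def NetTendstoZero (D : DirectedType) (u : D.ι → ℝ) : Prop :=
  ∀ ε : ℝ, 0 < ε → ∃ i₀, ∀ i, D.r i₀ i → |u i| < ε

variable {X : Type*} [NormedAddCommGroup X] [Lattice X] [HasSolidNorm X] [IsOrderedAddMonoid X] [NormedSpace ℝ X]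

/-- Order convergence of a net: there is a decreasing net `h` with infimum `0`
dominating `|f i - x|` eventually. -/
def OrderConvNet (D : DirectedType) (f : D.ι → X) (x : X) : Prop :=
  ∃ (E : DirectedType) (h : E.ι → X),
    (∀ γ₁ γ₂, E.r γ₁ γ₂ → h γ₂ ≤ h γ₁) ∧ IsGLB (Set.range h) 0 ∧
      ∀ γ, ∃ i₀, ∀ i, D.r i₀ i → |f i - x| ≤ h γ

/-- The order closure of a set: all limits of order convergent nets from the set. -/
def OrderClosure (C : Set X) : Set X :=
  {x | ∃ (D : DirectedType) (f : D.ι → X), (∀ i, f i ∈ C) ∧ OrderConvNet D f x}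

/-- A set is order closed if it contains all order limits of nets from it. -/
def IsOrderClosed (C : Set X) : Prop := OrderClosure C ⊆ C

/-- Unbounded order convergence of a net. -/
def UOConvNet (D : DirectedType) (f : D.ι → X) (x : X) : Prop :=
  ∀ h : X, 0 ≤ h → OrderConvNet D (fun i => |f i - x| ⊓ h) 0

/-- Membership in the order continuous dual `X_n^~`. -/
def InOCDual (g : X →L[ℝ] ℝ) : Prop :=
  ∀ (D : DirectedType) (f : D.ι → X), OrderConvNet D f 0 →
    NetTendstoZero D fun i => g (f i)

/-- Membership in the unbounded order continuous dual `X_uo^~`. -/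
def InUODual (g : X →L[ℝ] ℝ) : Prop :=
  ∀ (D : DirectedType) (f : D.ι → X), (∃ M, ∀ i, ‖f i‖ ≤ M) → UOConvNet D f 0 →
    NetTendstoZero D fun i => g (f i)

/-- Convergence of a net in the topology `σ(X, X_n^~)`. -/
def SigmaNConvNet (D : DirectedType) (f : D.ι → X) (x : X) : Prop :=
  ∀ g : X →L[ℝ] ℝ, InOCDual g → NetTendstoZero D fun i => g (f i) - g x

/-- Convergence of a net in the topology `σ(X, X_uo^~)`. -/
def SigmaUOConvNet (D : DirectedType) (f : D.ι → X) (x : X) : Prop :=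
  ∀ g : X →L[ℝ] ℝ, InUODual g → NetTendstoZero D fun i => g (f i) - g x

/-- A set is `σ(X, X_n^~)`-closed. -/
def IsSigmaNClosed (C : Set X) : Prop :=
  ∀ (D : DirectedType) (f : D.ι → X), (∀ i, f i ∈ C) →
    ∀ x, SigmaNConvNet D f x → x ∈ C

/-- A set is `σ(X, X_uo^~)`-closed. -/
def IsSigmaUOClosed (C : Set X) : Prop :=
  ∀ (D : DirectedType) (f : D.ι → X), (∀ i, f i ∈ C) →
    ∀ x, SigmaUOConvNet D f x → x ∈ C

/-- The `σ(X, X_n^~)`-closure of a set. -/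
def SigmaNClosure (C : Set X) : Set X :=
  {x | ∃ (D : DirectedType) (f : D.ι → X), (∀ i, f i ∈ C) ∧ SigmaNConvNet D f x}

/-- The `|σ|(X, X_n^~)`-sequential closure of a set. -/
def AbsSigmaSeqClosure (C : Set X) : Set X :=
  {x | ∃ s : ℕ → X, (∀ n, s n ∈ C) ∧
    ∀ g : X →L[ℝ] ℝ, InOCDual g → Tendsto (fun n => g (|s n - x|)) atTop (𝓝 0)}

/-- A set is `|σ|(X, X_n^~)`-sequentially closed. -/
def IsAbsSigmaSeqClosed (C : Set X) : Prop := AbsSigmaSeqClosure C ⊆ C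

/-- The order on the dual: `g ≤ h` iff `g x ≤ h x` on the positive cone. -/
def dualLE (g h : X →L[ℝ] ℝ) : Prop := ∀ x : X, 0 ≤ x → g x ≤ h x

/-- Order continuity of the norm on a subset `S` of the dual: every net in `S`
decreasing to `0` (infimum `0` among lower bounds from `S`) converges to `0` in
the operator norm. -/
def DualOCOn (S : Set (X →L[ℝ] ℝ)) : Prop :=
  ∀ (D : DirectedType) (f : D.ι → (X →L[ℝ] ℝ)), (∀ i, f i ∈ S) →
    (∀ i j, D.r i j → dualLE (f j) (f i)) → (∀ i, dualLE 0 (f i)) →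
    (∀ h ∈ S, (∀ i, dualLE h (f i)) → dualLE h 0) →
    NetTendstoZero D fun i => ‖f i‖

/-- A sequence is weakly null. -/
def WeaklyNull (f : ℕ → X) : Prop :=
  ∀ g : X →L[ℝ] ℝ, Tendsto (fun n => g (f n)) atTop (𝓝 0)

/-- The sequence satisfies a lower `ℓ¹`-estimate, i.e. it is equivalent to the
unit vector basis of `ℓ¹`. -/
def IsL1Basic (f : ℕ → X) : Prop :=
  ∃ M : ℝ, 0 < M ∧ ∀ (m : ℕ) (a : ℕ → ℝ),
    (1 / M) * ∑ k ∈ Finset.range m, |a k| ≤ ‖∑ k ∈ Finset.range m, a k • f k‖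

variable (X)

/-- Order continuity of the norm of `X`. -/
def OCNorm : Prop :=
  ∀ (D : DirectedType) (f : D.ι → X), (∀ i j, D.r i j → f j ≤ f i) →
    IsGLB (Set.range f) 0 → NetTendstoZero D fun i => ‖f i‖

/-- The order continuous dual as a set of continuous linear functionals. -/
def OCDual : Set (X →L[ℝ] ℝ) := {g | InOCDual g}

/-- The norm dual `X*` is order continuous. -/
def DualOrderContinuous : Prop := DualOCOn (Set.univ : Set (X →L[ℝ] ℝ))

/-- The order continuous dual `X_n^~` is order continuous. -/
def OCDualOrderContinuous : Prop := DualOCOn (OCDual X)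

/-- `X` is monotonically complete. -/
def MonotonicallyComplete : Prop :=
  ∀ (D : DirectedType) (f : D.ι → X), (∀ i j, D.r i j → f i ≤ f j) →
    (∃ M, ∀ i, ‖f i‖ ≤ M) → ∃ s, IsLUB (Set.range f) s

/-- `X` is Dedekind complete. -/
def DedekindComplete : Prop :=
  ∀ S : Set X, S.Nonempty → BddAbove S → ∃ s, IsLUB S s

/-- `X` is σ-Dedekind complete. -/
def SigmaDedekindComplete : Prop :=
  ∀ f : ℕ → X, BddAbove (Set.range f) → ∃ s, IsLUB (Set.range f) s

/-- `X` has the weak Fatou property. -/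
def WeakFatou : Prop :=
  ∃ r : ℝ, 0 < r ∧ ∀ (D : DirectedType) (f : D.ι → X),
    (∀ i j, D.r i j → f i ≤ f j) → ∀ s, IsLUB (Set.range f) s →
    ∀ M : ℝ, (∀ i, ‖f i‖ ≤ M) → ‖s‖ ≤ r * M

/-- `X_n^~` separates the points of `X`. -/
def OCDualSeparatesPoints : Prop :=
  ∀ x : X, x ≠ 0 → ∃ g : X →L[ℝ] ℝ, InOCDual g ∧ g x ≠ 0

/-- `X_n^~` contains a strictly positive element. -/
def HasStrictlyPositiveOCFunctional : Prop :=
  ∃ g : X →L[ℝ] ℝ, InOCDual g ∧ ∀ x : X, x ≠ 0 → 0 < g (|x|)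

/-- The unit ball `B` determined by `X_n^~`. -/
def KSBall : Set X :=
  {x | ∀ g : X →L[ℝ] ℝ, InOCDual g → dualLE 0 g → ‖g‖ ≤ 1 → g (|x|) ≤ 1}

/-- `σ(X, X_n^~)` has the Krein–Smulian property. -/
def KreinSmulianProperty : Prop :=
  ∀ C : Set X, Convex ℝ C →
    (∀ k : ℕ, IsSigmaNClosed (C ∩ (k : ℝ) • KSBall X)) → IsSigmaNClosed C

/-- Property `P1`: every order closed convex set is `σ(X, X_n^~)`-closed. -/
def PropP1 : Prop := ∀ C : Set X, Convex ℝ C → IsOrderClosed C → IsSigmaNClosed C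

/-- Property `P4`: every norm bounded order closed convex set is
`|σ|(X, X_n^~)`-sequentially closed. -/
def PropP4 : Prop :=
  ∀ C : Set X, Convex ℝ C → (∃ M, ∀ x ∈ C, ‖x‖ ≤ M) → IsOrderClosed C →
    IsAbsSigmaSeqClosed C

/-- The disjoint order continuity property. -/
def DOCP : Prop :=
  ∀ f : ℕ → X, (∀ n, 0 ≤ f n) → (∃ M, ∀ n, ‖f n‖ ≤ M) →
    (∀ n m, n ≠ m → f n ⊓ f m = 0) →
    (∀ g : X →L[ℝ] ℝ, InOCDual g → Tendsto (fun n => g (f n)) atTop (𝓝 0)) →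
    WeaklyNull f

/-- The order continuous part `X_a` of `X`. -/
def OrderContPart : Set X :=
  {f | ∀ (D : DirectedType) (g : D.ι → X), (∀ i, |g i| ≤ |f|) →
    OrderConvNet D g 0 → NetTendstoZero D fun i => ‖g i‖}

/-- The order subsequence splitting property. -/
def OSSP : Prop :=
  ∀ f : ℕ → X, (∀ n, 0 ≤ f n) → (∃ M, ∀ n, ‖f n‖ ≤ M) → UOConvNet natDir f 0 →
    ∃ φ : ℕ → ℕ, StrictMono φ ∧ ∃ x y z : ℕ → X,
      (∀ k, f (φ k) = x k + y k + z k) ∧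
      (∀ k, 0 ≤ x k) ∧ (∀ k, 0 ≤ y k) ∧ (∀ k, 0 ≤ z k) ∧
      (∀ k, x k ∈ OrderContPart X) ∧
      (∀ k l, k ≠ l → y k ⊓ y l = 0) ∧
      (∃ b, ∀ k, z k ≤ b)

variable {X}

/-!
For `g ∈ X*` the Riesz–Kantorovich formula `P g x = sup {g y | y ∈ X_a, 0 ≤ y ≤ x}` is additive
on the positive cone, so `x ↦ P g x⁺ - P g x⁻` is a bounded linear functional, and
`P g - P (-g)` agrees with `g` on the ideal `X_a`. This extension is order continuous. If
`h_γ ↓ 0` but `P g h_γ ≥ ε` for all `γ`, pick `y_k ∈ X_a` with `0 ≤ y_k ≤ h_{γ_k}` and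
`g y_k > ε / 2`, with `γ_k` so late that `s_{k-1} = y_1 + ⋯ + y_{k-1} ∈ X_a` satisfies
`‖s_{k-1} ⊓ h_{γ_k}‖ < 2⁻ᵏ`. Then `s_k` stays within distance `2` of
`y_1 ⊔ ⋯ ⊔ y_k ≤ h_{γ_0}`, so it is norm bounded, while `g s_k ≥ k ε / 2`.
Hence `g (f n)`, the value of the extension at `f n`, tends to `0`.
-/

namespace NetTendstoZero

variable {D : DirectedType} {u v w : D.ι → ℝ}

lemma of_abs_le (hu : NetTendstoZero D u) (h : ∀ i, |w i| ≤ |u i|) : NetTendstoZero D w :=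
  fun ε hε => (hu ε hε).imp fun _ hi i hri => (h i).trans_lt (hi i hri)

lemma add (hu : NetTendstoZero D u) (hv : NetTendstoZero D v) :
    NetTendstoZero D fun i => u i + v i := by
  intro ε hε
  obtain ⟨i₁, h₁⟩ := hu (ε / 2) (by linarith)
  obtain ⟨i₂, h₂⟩ := hv (ε / 2) (by linarith)
  obtain ⟨i₀, hi₁, hi₂⟩ := D.directed i₁ i₂
  refine ⟨i₀, fun i hi => ?_⟩
  have := h₁ i (D.trans _ _ _ hi₁ hi)
  have := h₂ i (D.trans _ _ _ hi₂ hi)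
  calc |u i + v i| ≤ |u i| + |v i| := abs_add_le _ _
    _ < ε := by linarith

lemma of_dominated {E : DirectedType} {v : E.ι → ℝ} (hv : NetTendstoZero E v)
    (h : ∀ γ, ∃ i₀, ∀ i, D.r i₀ i → |u i| ≤ v γ) : NetTendstoZero D u := by
  intro ε hε
  obtain ⟨γ, hγ⟩ := hv ε hε
  obtain ⟨i₀, hi₀⟩ := h γ
  exact ⟨i₀, fun i hi =>
    (hi₀ i hi).trans_lt ((le_abs_self _).trans_lt (hγ γ (E.refl γ)))⟩

lemma of_antitone (hdec : ∀ i j, D.r i j → v j ≤ v i) (hv : ∀ i, 0 ≤ v i)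
    (hsmall : ∀ ε, 0 < ε → ∃ i, v i < ε) : NetTendstoZero D v := fun ε hε =>
  (hsmall ε hε).imp fun i₀ hi₀ i hi => by
    rw [abs_of_nonneg (hv i)]
    exact (hdec i₀ i hi).trans_lt hi₀

end NetTendstoZero

section LatticeOrderedGroup

variable {G : Type*} [AddCommGroup G] [Lattice G] [IsOrderedAddMonoid G]

lemma posPart_le_abs (x : G) : x⁺ ≤ |x| := sup_le (le_abs_self x) (abs_nonneg x)

lemma negPart_le_abs (x : G) : x⁻ ≤ |x| := sup_le (neg_le_abs x) (abs_nonneg x)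

lemma sub_inf_le_of_le_add {x y z : G} (hy : 0 ≤ y) (h : z ≤ x + y) : z - z ⊓ x ≤ y := by
  rw [sub_inf, sub_self]
  exact sup_le hy (sub_le_iff_le_add'.2 h)

lemma add_sub_sup_eq (s t y : G) : s + y - t ⊔ y = s - t + t ⊓ y := by
  rw [eq_sub_of_add_eq' (inf_add_sup t y)]
  abel

lemma posPart_add_add_negPart_add_negPart (x y : G) :
    (x + y)⁺ + (x⁻ + y⁻) = x⁺ + y⁺ + (x + y)⁻ := by
  refine sub_eq_sub_iff_add_eq_add.mp ?_
  rw [posPart_sub_negPart, show x⁺ + y⁺ - (x⁻ + y⁻) = (x⁺ - x⁻) + (y⁺ - y⁻) by abel,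
    posPart_sub_negPart, posPart_sub_negPart]

end LatticeOrderedGroup

section OrderContPart

variable {Y : Type*} [NormedAddCommGroup Y] [Lattice Y]

lemma mem_orderContPart_of_abs_le {a b : Y} (ha : a ∈ OrderContPart Y) (hba : |b| ≤ |a|) :
    b ∈ OrderContPart Y := fun D g hg hconv => ha D g (fun i => (hg i).trans hba) hconv

lemma OrderConvNet.of_abs_le {D : DirectedType} {u v : D.ι → Y} (h : ∀ i, |u i| ≤ |v i|)
    (hv : OrderConvNet D v 0) : OrderConvNet D u 0 := by
  obtain ⟨E, w, hdec, hglb, hdom⟩ := hv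
  refine ⟨E, w, hdec, hglb, fun γ => (hdom γ).imp fun i₀ hi₀ i hi => ?_⟩
  have hvi := hi₀ i hi
  rw [sub_zero] at hvi ⊢
  exact (h i).trans hvi

variable [IsOrderedAddMonoid Y]

lemma netTendstoZero_norm_inf {E : DirectedType} {h : E.ι → Y}
    (hdec : ∀ γ₁ γ₂, E.r γ₁ γ₂ → h γ₂ ≤ h γ₁) (hglb : IsGLB (Set.range h) 0)
    {s : Y} (hs : s ∈ OrderContPart Y) (hs0 : 0 ≤ s) :
    NetTendstoZero E fun γ => ‖s ⊓ h γ‖ := by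
  have hpos : ∀ γ, 0 ≤ s ⊓ h γ := fun γ => le_inf hs0 (hglb.1 ⟨γ, rfl⟩)
  refine hs E _ (fun γ => ?_) ⟨E, h, hdec, hglb, fun γ => ⟨γ, fun δ hγδ => ?_⟩⟩
  · rw [abs_of_nonneg (hpos γ), abs_of_nonneg hs0]
    exact inf_le_left
  · rw [sub_zero, abs_of_nonneg (hpos δ)]
    exact inf_le_right.trans (hdec γ δ hγδ)

variable [HasSolidNorm Y]

lemma zero_mem_orderContPart : (0 : Y) ∈ OrderContPart Y := by
  intro D g hg _ ε hε
  obtain ⟨i₀⟩ := D.nonempty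
  refine ⟨i₀, fun i _ => ?_⟩
  have : ‖g i‖ ≤ ‖(0 : Y)‖ := norm_le_norm_of_abs_le_abs (by simpa using hg i)
  rw [norm_zero] at this
  rwa [abs_of_nonneg (norm_nonneg _), this.antisymm (norm_nonneg _)]

lemma add_mem_orderContPart {a b : Y} (ha : a ∈ OrderContPart Y) (hb : b ∈ OrderContPart Y) :
    a + b ∈ OrderContPart Y := by
  intro D u hu hconv
  set p : D.ι → Y := fun i => |u i| ⊓ |a|
  set q : D.ι → Y := fun i => |u i| - p i
  have hp0 : ∀ i, 0 ≤ p i := fun i => le_inf (abs_nonneg _) (abs_nonneg _)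
  have hq0 : ∀ i, 0 ≤ q i := fun i => sub_nonneg.2 inf_le_left
  have hpu : ∀ i, |p i| ≤ |u i| := fun i => by rw [abs_of_nonneg (hp0 i)]; exact inf_le_left
  have hqu : ∀ i, |q i| ≤ |u i| := fun i => by
    rw [abs_of_nonneg (hq0 i)]; exact sub_le_self _ (hp0 i)
  have hpa : ∀ i, |p i| ≤ |a| := fun i => by rw [abs_of_nonneg (hp0 i)]; exact inf_le_right
  have hqb : ∀ i, |q i| ≤ |b| := fun i => by
    rw [abs_of_nonneg (hq0 i)]
    exact sub_inf_le_of_le_add (abs_nonneg b) ((hu i).trans (abs_add_le a b))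
  refine ((ha D p hpa (hconv.of_abs_le hpu)).add
    (hb D q hqb (hconv.of_abs_le hqu))).of_abs_le fun i => ?_
  have hsplit : |u i| = p i + q i := (add_sub_cancel (p i) _).symm
  rw [abs_of_nonneg (norm_nonneg _), abs_of_nonneg (add_nonneg (norm_nonneg _) (norm_nonneg _)),
    ← norm_abs_eq_norm, hsplit]
  exact norm_add_le _ _

end OrderContPart

section OCPosPart

variable {Y : Type*} [NormedAddCommGroup Y] [Lattice Y] [HasSolidNorm Y] [IsOrderedAddMonoid Y]
  [NormedSpace ℝ Y]

lemma apply_le_opNorm_mul_of_le (g : Y →L[ℝ] ℝ) {x y : Y} (hy : 0 ≤ y) (hyx : y ≤ x) :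
    g y ≤ ‖g‖ * ‖x‖ :=
  (le_abs_self _).trans <| (g.le_opNorm y).trans <|
    mul_le_mul_of_nonneg_left (norm_le_norm_of_abs_le_abs (abs_le_abs_of_nonneg hy hyx))
      (norm_nonneg g)

/-- For `x ≥ 0` this is the Riesz–Kantorovich formula for the positive part of `g` restricted
to `X_a`, evaluated at a point `x` of `X`. -/
def ocPosPart (g : Y →L[ℝ] ℝ) (x : Y) : ℝ := sSup (g '' (OrderContPart Y ∩ Set.Icc 0 x))

variable (g : Y →L[ℝ] ℝ) {x y : Y}

lemma nonempty_image_orderContPart_inter_Icc (hx : 0 ≤ x) :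
    (g '' (OrderContPart Y ∩ Set.Icc 0 x)).Nonempty :=
  ⟨g 0, 0, ⟨zero_mem_orderContPart, le_rfl, hx⟩, rfl⟩

lemma bddAbove_image_orderContPart_inter_Icc :
    BddAbove (g '' (OrderContPart Y ∩ Set.Icc 0 x)) :=
  ⟨‖g‖ * ‖x‖, by
    rintro _ ⟨y, ⟨-, hy0, hyx⟩, rfl⟩
    exact apply_le_opNorm_mul_of_le g hy0 hyx⟩

lemma le_ocPosPart (hy : y ∈ OrderContPart Y) (hy0 : 0 ≤ y) (hyx : y ≤ x) :
    g y ≤ ocPosPart g x :=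
  le_csSup (bddAbove_image_orderContPart_inter_Icc g) ⟨y, ⟨hy, hy0, hyx⟩, rfl⟩

lemma ocPosPart_le_iff (hx : 0 ≤ x) {r : ℝ} :
    ocPosPart g x ≤ r ↔ ∀ y ∈ OrderContPart Y, 0 ≤ y → y ≤ x → g y ≤ r := by
  rw [ocPosPart, csSup_le_iff (bddAbove_image_orderContPart_inter_Icc g)
    (nonempty_image_orderContPart_inter_Icc g hx)]
  exact ⟨fun h y hy hy0 hyx => h _ ⟨y, ⟨hy, hy0, hyx⟩, rfl⟩,
    fun h _ ⟨y, ⟨hy, hy0, hyx⟩, hr⟩ => hr ▸ h y hy hy0 hyx⟩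

lemma ocPosPart_nonneg (hx : 0 ≤ x) : 0 ≤ ocPosPart g x := by
  simpa using le_ocPosPart g zero_mem_orderContPart le_rfl hx

lemma ocPosPart_le_opNorm_mul (hx : 0 ≤ x) : ocPosPart g x ≤ ‖g‖ * ‖x‖ :=
  (ocPosPart_le_iff g hx).2 fun _ _ hy0 hyx => apply_le_opNorm_mul_of_le g hy0 hyx

lemma ocPosPart_mono (hx : 0 ≤ x) (hxy : x ≤ y) : ocPosPart g x ≤ ocPosPart g y :=
  (ocPosPart_le_iff g hx).2 fun _ hz hz0 hzx => le_ocPosPart g hz hz0 (hzx.trans hxy)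

lemma ocPosPart_add (hx : 0 ≤ x) (hy : 0 ≤ y) :
    ocPosPart g (x + y) = ocPosPart g x + ocPosPart g y := by
  apply le_antisymm
  · -- Riesz decomposition: `z = z ⊓ x + (z - z ⊓ x)` with the pieces below `x` and `y`
    refine (ocPosPart_le_iff g (add_nonneg hx hy)).2 fun z hz hz0 hzxy => ?_
    have h₁0 : 0 ≤ z ⊓ x := le_inf hz0 hx
    have hz₁ : z ⊓ x ∈ OrderContPart Y := mem_orderContPart_of_abs_le hz
      (abs_le_abs_of_nonneg h₁0 inf_le_left)
    have hz₂ : z - z ⊓ x ∈ OrderContPart Y := mem_orderContPart_of_abs_le hz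
      (abs_le_abs_of_nonneg (sub_nonneg.2 inf_le_left) (sub_le_self _ h₁0))
    calc g z = g (z ⊓ x) + g (z - z ⊓ x) := by rw [← map_add, add_sub_cancel]
      _ ≤ ocPosPart g x + ocPosPart g y :=
        add_le_add (le_ocPosPart g hz₁ h₁0 inf_le_right)
          (le_ocPosPart g hz₂ (sub_nonneg.2 inf_le_left) (sub_inf_le_of_le_add hy hzxy))
  · rw [← le_sub_iff_add_le, ocPosPart_le_iff g hx]
    intro z₁ hz₁ hz₁0 hz₁x
    rw [le_sub_comm, ocPosPart_le_iff g hy]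
    intro z₂ hz₂ hz₂0 hz₂y
    rw [le_sub_iff_add_le', ← map_add]
    exact le_ocPosPart g (add_mem_orderContPart hz₁ hz₂) (add_nonneg hz₁0 hz₂0)
      (add_le_add hz₁x hz₂y)

lemma ocPosPart_neg (hx : x ∈ OrderContPart Y) (hx0 : 0 ≤ x) :
    ocPosPart (-g) x = ocPosPart g x - g x := by
  -- `y ↦ x - y` is an involution of `X_a ∩ [0, x]`
  have hcompl : ∀ y, 0 ≤ y → y ≤ x → x - y ∈ OrderContPart Y := fun y hy0 hyx =>
    mem_orderContPart_of_abs_le hx (abs_le_abs_of_nonneg (sub_nonneg.2 hyx) (sub_le_self _ hy0))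
  apply le_antisymm
  · refine (ocPosPart_le_iff (-g) hx0).2 fun y _ hy0 hyx => ?_
    have := le_ocPosPart g (hcompl y hy0 hyx) (sub_nonneg.2 hyx) (sub_le_self _ hy0)
    rw [map_sub] at this
    rw [neg_apply]
    linarith
  · rw [sub_le_iff_le_add, ocPosPart_le_iff g hx0]
    intro y _ hy0 hyx
    have := le_ocPosPart (-g) (hcompl y hy0 hyx) (sub_nonneg.2 hyx) (sub_le_self _ hy0)
    rw [neg_apply, map_sub] at this
    linarith

end OCPosPart

section OrderContinuity

variable {Y : Type*} [NormedAddCommGroup Y] [Lattice Y] [HasSolidNorm Y] [IsOrderedAddMonoid Y]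
  [NormedSpace ℝ Y] {E : DirectedType} {h : E.ι → Y} {g : Y →L[ℝ] ℝ} {c : ℝ}

lemma exists_orderContPart_step (hdec : ∀ γ₁ γ₂, E.r γ₁ γ₂ → h γ₂ ≤ h γ₁)
    (hglb : IsGLB (Set.range h) 0)
    (hbig : ∀ γ, ∃ y ∈ OrderContPart Y, 0 ≤ y ∧ y ≤ h γ ∧ c < g y) (γ₀ : E.ι)
    {s t : Y} (hs : s ∈ OrderContPart Y) (ht0 : 0 ≤ t) (hts : t ≤ s) (hth : t ≤ h γ₀)
    {η : ℝ} (hη : 0 < η) :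
    ∃ s' t', s' ∈ OrderContPart Y ∧ 0 ≤ t' ∧ t' ≤ s' ∧ t' ≤ h γ₀ ∧
      ‖s' - t'‖ ≤ ‖s - t‖ + η ∧ g s + c < g s' := by
  have hs0 : 0 ≤ s := ht0.trans hts
  obtain ⟨γ₁, hγ₁⟩ := netTendstoZero_norm_inf hdec hglb hs hs0 η hη
  obtain ⟨γ, hγ₀γ, hγ₁γ⟩ := E.directed γ₀ γ₁
  obtain ⟨y, hy, hy0, hyh, hgy⟩ := hbig γ
  refine ⟨s + y, t ⊔ y, add_mem_orderContPart hs hy, ht0.trans le_sup_left,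
    sup_le (hts.trans (le_add_of_nonneg_right hy0)) (le_add_of_nonneg_left hs0),
    sup_le hth (hyh.trans (hdec γ₀ γ hγ₀γ)), ?_, by rw [map_add]; linarith⟩
  have hoverlap : ‖t ⊓ y‖ ≤ ‖s ⊓ h γ‖ := norm_le_norm_of_abs_le_abs
    (abs_le_abs_of_nonneg (le_inf ht0 hy0) (inf_le_inf hts hyh))
  have hsmall : ‖s ⊓ h γ‖ < η := by
    simpa only [abs_norm] using hγ₁ γ hγ₁γ
  rw [add_sub_sup_eq]
  linarith [norm_add_le (s - t) (t ⊓ y)]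

lemma exists_orderContPart_chain (hdec : ∀ γ₁ γ₂, E.r γ₁ γ₂ → h γ₂ ≤ h γ₁)
    (hglb : IsGLB (Set.range h) 0)
    (hbig : ∀ γ, ∃ y ∈ OrderContPart Y, 0 ≤ y ∧ y ≤ h γ ∧ c < g y) (γ₀ : E.ι)
    (k : ℕ) :
    ∃ s t, s ∈ OrderContPart Y ∧ 0 ≤ t ∧ t ≤ s ∧ t ≤ h γ₀ ∧
      ‖s - t‖ ≤ 2 - 2 * (1 / 2 : ℝ) ^ k ∧ k * c ≤ g s := by
  induction k with
  | zero =>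
    exact ⟨0, 0, zero_mem_orderContPart, le_rfl, le_rfl, hglb.1 ⟨γ₀, rfl⟩,
      by simp, by simp⟩
  | succ k ih =>
    obtain ⟨s, t, hs, ht0, hts, hth, hnorm, hgs⟩ := ih
    obtain ⟨s', t', hs', ht'0, ht's', ht'h, hnorm', hgs'⟩ :=
      exists_orderContPart_step hdec hglb hbig γ₀ hs ht0 hts hth
        (show (0 : ℝ) < (1 / 2) ^ k by positivity)
    refine ⟨s', t', hs', ht'0, ht's', ht'h, ?_, ?_⟩
    · rw [pow_succ]
      linarith
    · push_cast
      linarith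

lemma exists_ocPosPart_lt (hdec : ∀ γ₁ γ₂, E.r γ₁ γ₂ → h γ₂ ≤ h γ₁)
    (hglb : IsGLB (Set.range h) 0) {ε : ℝ} (hε : 0 < ε) : ∃ γ, ocPosPart g (h γ) < ε := by
  by_contra! hcon
  have hbig : ∀ γ, ∃ y ∈ OrderContPart Y, 0 ≤ y ∧ y ≤ h γ ∧ ε / 2 < g y := by
    intro γ
    by_contra! hsmall
    have := (ocPosPart_le_iff g (hglb.1 ⟨γ, rfl⟩)).2 hsmall
    linarith [hcon γ]
  obtain ⟨γ₀⟩ := E.nonempty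
  obtain ⟨k, hk⟩ := exists_nat_gt (‖g‖ * (‖h γ₀‖ + 2) / (ε / 2))
  obtain ⟨s, t, -, ht0, -, hth, hnorm, hgs⟩ :=
    exists_orderContPart_chain hdec hglb hbig γ₀ k
  have hnt : ‖t‖ ≤ ‖h γ₀‖ := norm_le_norm_of_abs_le_abs (abs_le_abs_of_nonneg ht0 hth)
  have hns : ‖s‖ ≤ ‖h γ₀‖ + 2 := by
    have : (0 : ℝ) < 2 * (1 / 2) ^ k := by positivity
    linarith [norm_le_norm_add_norm_sub' s t]
  have hgs_le : g s ≤ ‖g‖ * (‖h γ₀‖ + 2) :=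
    (le_abs_self _).trans ((g.le_opNorm s).trans (by gcongr))
  rw [div_lt_iff₀ (by linarith)] at hk
  linarith

lemma netTendstoZero_ocPosPart (hdec : ∀ γ₁ γ₂, E.r γ₁ γ₂ → h γ₂ ≤ h γ₁)
    (hglb : IsGLB (Set.range h) 0) : NetTendstoZero E fun γ => ocPosPart g (h γ) :=
  have hpos : ∀ γ, 0 ≤ h γ := fun γ => hglb.1 ⟨γ, rfl⟩
  NetTendstoZero.of_antitone
    (fun γ₁ γ₂ hγ => ocPosPart_mono g (hpos γ₂) (hdec γ₁ γ₂ hγ))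
    (fun γ => ocPosPart_nonneg g (hpos γ)) fun _ hε => exists_ocPosPart_lt hdec hglb hε

end OrderContinuity

section OCExtension

variable {Y : Type*} [NormedAddCommGroup Y] [Lattice Y] [HasSolidNorm Y] [IsOrderedAddMonoid Y]
  [NormedSpace ℝ Y] (g : Y →L[ℝ] ℝ)

def ocPosPartHom : Y →+ ℝ :=
  AddMonoidHom.mk' (fun x => ocPosPart g x⁺ - ocPosPart g x⁻) fun x y => by
    have key := congrArg (ocPosPart g) (posPart_add_add_negPart_add_negPart x y)
    simp only [ocPosPart_add g, posPart_nonneg, negPart_nonneg, add_nonneg] at key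
    linarith

lemma ocPosPartHom_apply (x : Y) : ocPosPartHom g x = ocPosPart g x⁺ - ocPosPart g x⁻ := rfl

lemma abs_ocPosPartHom_le (x : Y) : |ocPosPartHom g x| ≤ ocPosPart g |x| := by
  have h₁ := ocPosPart_mono g (posPart_nonneg x) (posPart_le_abs x)
  have h₂ := ocPosPart_mono g (negPart_nonneg x) (negPart_le_abs x)
  have h₃ := ocPosPart_nonneg g (posPart_nonneg x)
  have h₄ := ocPosPart_nonneg g (negPart_nonneg x)
  rw [ocPosPartHom_apply, abs_le]
  constructor <;> linarith

def ocPosPartCLM : Y →L[ℝ] ℝ :=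
  (ocPosPartHom g).toRealLinearMap <| AddMonoidHomClass.continuous_of_bound _ ‖g‖ fun x =>
    (abs_ocPosPartHom_le g x).trans <| (ocPosPart_le_opNorm_mul g (abs_nonneg x)).trans_eq <| by
      rw [norm_abs_eq_norm]

lemma ocPosPartCLM_apply (x : Y) : ocPosPartCLM g x = ocPosPartHom g x := by
  rw [ocPosPartCLM, AddMonoidHom.coe_toRealLinearMap]

def ocExtension : Y →L[ℝ] ℝ := ocPosPartCLM g - ocPosPartCLM (-g)

lemma ocExtension_apply_of_mem {x : Y} (hx : x ∈ OrderContPart Y) : ocExtension g x = g x := by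
  have hpos := mem_orderContPart_of_abs_le hx
    ((abs_of_nonneg (posPart_nonneg x)).trans_le (posPart_le_abs x))
  have hneg := mem_orderContPart_of_abs_le hx
    ((abs_of_nonneg (negPart_nonneg x)).trans_le (negPart_le_abs x))
  rw [ocExtension, sub_apply, ocPosPartCLM_apply, ocPosPartCLM_apply,
    ocPosPartHom_apply, ocPosPartHom_apply, ocPosPart_neg g hpos (posPart_nonneg x),
    ocPosPart_neg g hneg (negPart_nonneg x)]
  conv_rhs => rw [← posPart_sub_negPart x, map_sub]
  ring

lemma inOCDual_ocExtension : InOCDual (ocExtension g) := by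
  rintro D f ⟨E, h, hdec, hglb, hdom⟩
  refine ((netTendstoZero_ocPosPart (g := g) hdec hglb).add
    (netTendstoZero_ocPosPart (g := -g) hdec hglb)).of_dominated
      fun γ => (hdom γ).imp fun i₀ hi₀ i hi => ?_
  have hfi : |f i| ≤ h γ := by simpa only [sub_zero] using hi₀ i hi
  rw [ocExtension, sub_apply, ocPosPartCLM_apply, ocPosPartCLM_apply]
  calc |ocPosPartHom g (f i) - ocPosPartHom (-g) (f i)|
      ≤ |ocPosPartHom g (f i)| + |ocPosPartHom (-g) (f i)| := abs_sub _ _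
    _ ≤ ocPosPart g (h γ) + ocPosPart (-g) (h γ) := add_le_add
        ((abs_ocPosPartHom_le g _).trans (ocPosPart_mono g (abs_nonneg _) hfi))
        ((abs_ocPosPartHom_le (-g) _).trans (ocPosPart_mono (-g) (abs_nonneg _) hfi))

end OCExtension

theorem stmt8_general {X : Type*} [NormedAddCommGroup X] [Lattice X] [HasSolidNorm X] [IsOrderedAddMonoid X] [NormedSpace ℝ X]
    (f : ℕ → X) (hf : ∀ n, f n ∈ OrderContPart X)
    (hnull : ∀ g : X →L[ℝ] ℝ, InOCDual g →
      Filter.Tendsto (fun n => g (f n)) Filter.atTop (nhds 0)) :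
    WeaklyNull f := fun g =>
  (hnull _ (inOCDual_ocExtension g)).congr fun n => ocExtension_apply_of_mem g (hf n)

/-- a sequence in the order continuous part `X_a` which is
`σ(X, X_n^~)`-null is weakly null. -/
theorem stmt8 {X : Type*} [NormedAddCommGroup X] [Lattice X] [HasSolidNorm X] [IsOrderedAddMonoid X] [NormedSpace ℝ X] [CompleteSpace X]
    (f : ℕ → X) (hf : ∀ n, f n ∈ OrderContPart X)
    (hnull : ∀ g : X →L[ℝ] ℝ, InOCDual g →
      Filter.Tendsto (fun n => g (f n)) Filter.atTop (nhds 0)) :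
    WeaklyNull f :=
  stmt8_general f hf hnull
end
end

section
/- Let X be a Banach lattice whose order continuous dual X_n^~ is order continuous and contains a strictly positive element. Then for every norm bounded convex set C ⊆ X, the σ(X, X_n^~)-closure of C equals the |σ|(X, X_n^~)-sequential closure of C (the set of f such that some sequence (f_n) in C satisfies |f_n − f| → 0 in σ(X, X_n^~)). -/
open Filter Topology Pointwise

noncomputable section

variable {X : Type*} [NormedAddCommGroup X] [Lattice X] [HasSolidNorm X] [IsOrderedAddMonoid X] [NormedSpace ℝ X]

variable (X)

variable {X}

/-! Fix a strictly positive `g₀ ∈ Xₙ~`. If `x` lies in the `σ(X, Xₙ~)`-closure of the convex set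
`C`, then `inf_{c ∈ C} g₀ |c - x| = 0`: otherwise Hahn–Banach separates `x` from
`C + {g₀ |·| < ε}` by a functional dominated by a multiple of `g₀ |·|`, hence order continuous.
This yields `cₙ ∈ C` with `g₀ |cₙ - x| → 0`.

For positive `h ∈ Xₙ~` the functionals `(h - k g₀)⁺` decrease to `0` inside `Xₙ~` (this is where
strict positivity of `g₀` enters), so their norms tend to `0` by order continuity of `Xₙ~`. As
`h ≤ (h - k g₀)⁺ + k g₀` on the positive cone and the `|cₙ - x|` are norm bounded, `h |cₙ - x| → 0`;
applying this to `|g| = g⁺ + (-g)⁺` gives `g |cₙ - x| → 0` for every `g ∈ Xₙ~`. The reverse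
inclusion is `|g (cₙ - x)| ≤ |g| |cₙ - x|`. -/

namespace DirectedType

def atTop (D : DirectedType) : Filter D.ι := ⨅ i, 𝓟 {j | D.r i j}

theorem hasBasis_atTop (D : DirectedType) :
    D.atTop.HasBasis (fun _ => True) fun i => {j | D.r i j} :=
  haveI := D.nonempty
  hasBasis_iInf_principal fun a b => (D.directed a b).imp fun _ hc =>
    ⟨fun _ hj => D.trans _ _ _ hc.1 hj, fun _ hj => D.trans _ _ _ hc.2 hj⟩

end DirectedType

theorem netTendstoZero_iff_tendsto {D : DirectedType} {u : D.ι → ℝ} :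
    NetTendstoZero D u ↔ Tendsto u D.atTop (𝓝 0) := by
  simp [D.hasBasis_atTop.tendsto_iff Metric.nhds_basis_ball, NetTendstoZero]

theorem tendsto_zero_of_forall_le_add {a b C e : ℕ → ℝ} (ha : ∀ n, 0 ≤ a n)
    (hb : Tendsto b atTop (𝓝 0)) (he : Tendsto e atTop (𝓝 0))
    (hle : ∀ c n, a n ≤ b c + C c * e n) : Tendsto a atTop (𝓝 0) := by
  refine tendsto_order.2 ⟨fun ε hε => Eventually.of_forall fun n => hε.trans_le (ha n),
    fun ε hε => ?_⟩
  obtain ⟨c, hc⟩ := (hb.eventually (gt_mem_nhds (half_pos hε))).exists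
  have hCe : Tendsto (fun n => C c * e n) atTop (𝓝 0) := by simpa using he.const_mul (C c)
  filter_upwards [hCe.eventually (gt_mem_nhds (half_pos hε))] with n hn
  linarith [hle c n]

section Separation

variable {V : Type*} [AddCommGroup V] [Module ℝ V]

theorem Seminorm.apply_le_of_forall_mem_ball_lt (p : Seminorm ℝ V) (f : V →ₗ[ℝ] ℝ) {r K : ℝ}
    (hr : 0 < r) (hf : ∀ b ∈ p.ball 0 r, f b < K) (y : V) : f y ≤ K / r * p y := by
  have key (t : ℝ) (ht : p y < t) : f y ≤ K / r * t := by
    have htpos : 0 < t := (apply_nonneg p y).trans_lt ht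
    have hb : (r / t) • y ∈ p.ball 0 r := by
      rw [p.mem_ball_zero, map_smul_eq_mul, Real.norm_of_nonneg (by positivity)]
      calc r / t * p y < r / t * t := by gcongr
        _ = r := div_mul_cancel₀ r htpos.ne'
    have := hf _ hb
    rw [map_smul, smul_eq_mul, div_mul_eq_mul_div, div_lt_iff₀ htpos] at this
    rw [div_mul_eq_mul_div, le_div_iff₀ hr]
    linarith
  exact ge_of_tendsto (((continuous_const_mul (K / r)).tendsto _).mono_left nhdsWithin_le_nhds)
    (eventually_nhdsWithin_of_forall fun t (ht : t ∈ Set.Ioi (p y)) => key t ht)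

variable [TopologicalSpace V] [IsTopologicalAddGroup V] [ContinuousSMul ℝ V]

theorem exists_dual_dominated_separating {p : Seminorm ℝ V} (hp : Continuous p) {C : Set V}
    (hC : Convex ℝ C) {x : V} {ε : ℝ} (hε : 0 < ε) (hCx : ∀ c ∈ C, ε ≤ p (c - x)) :
    ∃ (f : V →L[ℝ] ℝ) (K δ : ℝ), (∀ y, |f y| ≤ K * p y) ∧ 0 < δ ∧ ∀ c ∈ C, f c + δ ≤ f x := by
  rcases C.eq_empty_or_nonempty with rfl | ⟨c₀, hc₀⟩
  · exact ⟨0, 0, 1, by simp, one_pos, by simp⟩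
  have hopen : IsOpen (C + p.ball 0 ε) :=
    IsOpen.add_left (by rw [p.ball_zero_eq]; exact isOpen_lt hp continuous_const)
  have hdisj : Disjoint (C + p.ball 0 ε) {x} := by
    refine Set.disjoint_singleton_right.2 ?_
    rintro ⟨c, hc, b, hb, rfl⟩
    have := hCx c hc
    rw [sub_add_cancel_left, map_neg_eq_map] at this
    exact (p.mem_ball_zero.1 hb).not_ge this
  obtain ⟨f, u, hfu, hux⟩ :=
    geometric_hahn_banach_open (hC.add (p.convex_ball 0 ε)) hopen (convex_singleton x) hdisj
  have hsep (c : V) (hc : c ∈ C) (b : V) (hb : b ∈ p.ball 0 ε) : f c + f b < f x :=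
    (map_add f c b ▸ hfu _ (Set.add_mem_add hc hb)).trans_le (hux x rfl)
  have hbound (y : V) : f y ≤ (f x - f c₀) / ε * p y :=
    p.apply_le_of_forall_mem_ball_lt (f : V →ₗ[ℝ] ℝ) hε (fun b hb => by
      have := hsep c₀ hc₀ b hb
      simp only [ContinuousLinearMap.coe_coe]
      linarith) y
  set y := x - c₀
  have hy : 0 < f y := by simpa [y] using hsep c₀ hc₀ 0 (p.mem_ball_self hε)
  set t := ε / (p y + 1)
  have ht : 0 < t := div_pos hε (by positivity)
  have hty : t • y ∈ p.ball 0 ε := by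
    rw [p.mem_ball_zero, map_smul_eq_mul, Real.norm_of_nonneg ht.le, div_mul_eq_mul_div,
      div_lt_iff₀ (by positivity)]
    nlinarith
  refine ⟨f, (f x - f c₀) / ε, t * f y, fun z => abs_le.2 ⟨?_, hbound z⟩, by positivity,
    fun c hc => ?_⟩
  · exact neg_le.1 (by simpa using hbound (-z))
  · simpa using (hsep c hc _ hty).le

end Separation

theorem nonneg_of_two_pow_nsmul_nonneg {α : Type*} [Lattice α] [AddGroup α] [AddLeftMono α]
    [AddRightMono α] {a : α} : ∀ n : ℕ, 0 ≤ 2 ^ n • a → 0 ≤ a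
  | 0, h => by simpa using h
  | n + 1, h => nonneg_of_two_pow_nsmul_nonneg n <| nsmul_two_semiclosed <| by
      rwa [← mul_nsmul', ← pow_succ']

theorem abs_smul_of_lattice {𝕜 M : Type*} [Field 𝕜] [LinearOrder 𝕜] [IsStrictOrderedRing 𝕜]
    [Lattice M] [AddCommGroup M] [IsOrderedAddMonoid M] [Module 𝕜 M] [PosSMulMono 𝕜 M]
    (a : 𝕜) (x : M) : |a • x| = |a| • |x| := by
  have smul_le (a : 𝕜) (x : M) : a • x ≤ |a| • |x| := by
    rcases le_total 0 a with ha | ha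
    · rw [abs_of_nonneg ha]
      exact smul_le_smul_of_nonneg_left (le_abs_self x) ha
    · rw [abs_of_nonpos ha, ← neg_smul_neg]
      exact smul_le_smul_of_nonneg_left (neg_le_abs x) (neg_nonneg.2 ha)
  have abs_le (a : 𝕜) (x : M) : |a • x| ≤ |a| • |x| :=
    sup_le (smul_le a x) (by simpa [neg_smul] using smul_le (-a) x)
  rcases eq_or_ne a 0 with rfl | ha
  · simp
  refine le_antisymm (abs_le a x) ?_
  calc |a| • |x| = |a| • |a⁻¹ • a • x| := by rw [smul_smul, inv_mul_cancel₀ ha, one_smul]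
    _ ≤ |a| • (|a⁻¹| • |a • x|) := smul_le_smul_of_nonneg_left (abs_le _ _) (abs_nonneg a)
    _ = |a • x| := by rw [smul_smul, abs_inv, mul_inv_cancel₀ (abs_ne_zero.2 ha), one_smul]

theorem OrderConvNet.abs {E : Type*} [NormedAddCommGroup E] [Lattice E] [IsOrderedAddMonoid E]
    {D : DirectedType} {u : D.ι → E} (h : OrderConvNet D u 0) :
    OrderConvNet D (fun i => |u i|) 0 := by
  simpa [OrderConvNet] using h

section Functionals

variable {E : Type*} [NormedAddCommGroup E] [Lattice E] [NormedSpace ℝ E]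

theorem inOCDual_iff_tendsto {g : E →L[ℝ] ℝ} :
    InOCDual g ↔ ∀ (D : DirectedType) (u : D.ι → E), OrderConvNet D u 0 →
      Tendsto (fun i => g (u i)) D.atTop (𝓝 0) := by
  simp only [InOCDual, netTendstoZero_iff_tendsto]

variable (E) in
def ocDualSubmodule : Submodule ℝ (E →L[ℝ] ℝ) where
  carrier := OCDual E
  zero_mem' := inOCDual_iff_tendsto.2 fun _ _ _ => tendsto_const_nhds
  add_mem' {f g} hf hg := inOCDual_iff_tendsto.2 fun D u hu => by
    simpa using (inOCDual_iff_tendsto.1 hf D u hu).add (inOCDual_iff_tendsto.1 hg D u hu)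
  smul_mem' c g hg := inOCDual_iff_tendsto.2 fun D u hu => by
    simpa using (inOCDual_iff_tendsto.1 hg D u hu).const_mul c

-- On the positive cone, `g⁺ z = sup g([0, z])` (Riesz–Kantorovich).
def rieszSup (g : E →L[ℝ] ℝ) (z : E) : ℝ := sSup (g '' Set.Icc 0 z)

theorem nonempty_image_Icc (g : E →L[ℝ] ℝ) {z : E} (hz : 0 ≤ z) : (g '' Set.Icc 0 z).Nonempty :=
  ⟨g 0, 0, ⟨le_rfl, hz⟩, rfl⟩

theorem rieszSup_le (g : E →L[ℝ] ℝ) {z : E} (hz : 0 ≤ z) {B : ℝ}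
    (hB : ∀ w, 0 ≤ w → w ≤ z → g w ≤ B) : rieszSup g z ≤ B :=
  csSup_le (nonempty_image_Icc g hz) (by rintro _ ⟨w, ⟨hw, hwz⟩, rfl⟩; exact hB w hw hwz)

theorem exists_rieszSup_sub_lt_apply (g : E →L[ℝ] ℝ) {z : E} (hz : 0 ≤ z) {δ : ℝ} (hδ : 0 < δ) :
    ∃ w, 0 ≤ w ∧ w ≤ z ∧ rieszSup g z - δ < g w := by
  obtain ⟨_, ⟨w, ⟨hw, hwz⟩, rfl⟩, h⟩ :=
    exists_lt_of_lt_csSup (nonempty_image_Icc g hz) (sub_lt_self (rieszSup g z) hδ)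
  exact ⟨w, hw, hwz, h⟩

variable [IsOrderedAddMonoid E]

theorem abs_apply_le_apply_abs {g : E →L[ℝ] ℝ} (hg : Monotone g) (y : E) : |g y| ≤ g |y| :=
  abs_le.2 ⟨by simpa using hg (neg_le.1 (neg_le_abs y)), hg (le_abs_self y)⟩

theorem monotone_of_strictlyPositive {g₀ : E →L[ℝ] ℝ} (hg₀ : ∀ x : E, x ≠ 0 → 0 < g₀ |x|) :
    Monotone g₀ :=
  (monotone_iff_map_nonneg g₀).2 fun v hv => by
    rcases eq_or_ne v 0 with rfl | hne
    · simp
    · simpa [abs_of_nonneg hv] using (hg₀ v hne).le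

theorem InOCDual.of_abs_le {f g : E →L[ℝ] ℝ} (hg : InOCDual g) {K : ℝ}
    (hfg : ∀ y, |f y| ≤ K * g |y|) : InOCDual f :=
  inOCDual_iff_tendsto.2 fun D u hu => squeeze_zero_norm (fun i => hfg (u i)) <| by
    simpa using (inOCDual_iff_tendsto.1 hg D _ hu.abs).const_mul K

theorem orderConvNet_zero_of_antitone {g₀ : E →L[ℝ] ℝ} (hg₀ : ∀ x : E, x ≠ 0 → 0 < g₀ |x|)
    {p : ℕ → E} (hp : Antitone p) (hp0 : ∀ n, 0 ≤ p n)
    (hlim : Tendsto (fun n => g₀ (p n)) atTop (𝓝 0)) : OrderConvNet natDir p 0 := by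
  have hglb : IsGLB (Set.range p) 0 := by
    refine ⟨Set.forall_mem_range.2 hp0, fun b hb => ?_⟩
    have hbp : g₀ b⁺ ≤ 0 := ge_of_tendsto' hlim fun n =>
      monotone_of_strictlyPositive hg₀ (sup_le (hb ⟨n, rfl⟩) (hp0 n))
    have hb0 : b⁺ = 0 := by
      by_contra hne
      have := hg₀ _ hne
      rw [abs_of_nonneg (posPart_nonneg b)] at this
      linarith
    exact (le_posPart b).trans hb0.le
  exact ⟨natDir, p, fun _ _ h => hp h, hglb,
    fun n => ⟨n, fun m hm => by simpa [abs_of_nonneg (hp0 m)] using hp hm⟩⟩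

end Functionals

section NormedLattice

variable {E : Type*} [NormedAddCommGroup E] [Lattice E] [HasSolidNorm E] [IsOrderedAddMonoid E]
  [NormedSpace ℝ E]

theorem smul_nonneg_of_hasSolidNorm {t : ℝ} (ht : 0 ≤ t) {v : E} (hv : 0 ≤ v) : 0 ≤ t • v := by
  set d : ℕ → ℝ := fun n => (⌊t * 2 ^ n⌋₊ : ℝ) / 2 ^ n
  have hd : Tendsto d atTop (𝓝 t) :=
    (tendsto_nat_floor_mul_div_atTop ht).comp (tendsto_pow_atTop_atTop_of_one_lt one_lt_two)
  refine ge_of_tendsto (hd.smul_const v) (Eventually.of_forall fun n => ?_)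
  refine nonneg_of_two_pow_nsmul_nonneg n ?_
  have : 2 ^ n • (d n • v) = ⌊t * 2 ^ n⌋₊ • v := by
    rw [← Nat.cast_smul_eq_nsmul ℝ, smul_smul, ← Nat.cast_smul_eq_nsmul ℝ]
    simp only [d, Nat.cast_pow, Nat.cast_ofNat]
    rw [mul_div_cancel₀ _ (by positivity)]
  rw [this]
  exact nsmul_nonneg hv _

/- The hypotheses only make `E` a lattice-ordered group; compatibility with the real scalar
action comes from the dyadic approximations `⌊t 2ⁿ⌋ / 2ⁿ` of `t` (via `0 ≤ 2 • a → 0 ≤ a`) and the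
closedness of the positive cone. -/
instance HasSolidNorm.toPosSMulMono : PosSMulMono ℝ E :=
  PosSMulMono.of_smul_nonneg fun _ ht _ hv => smul_nonneg_of_hasSolidNorm ht hv

def absSeminorm (g : E →L[ℝ] ℝ) (hg : Monotone g) : Seminorm ℝ E :=
  Seminorm.of (fun y => g |y|) (fun x y => by simpa using hg (abs_add_le x y)) fun a x => by
    rw [abs_smul_of_lattice, map_smul, smul_eq_mul, Real.norm_eq_abs]

theorem continuous_absSeminorm (g : E →L[ℝ] ℝ) (hg : Monotone g) :
    Continuous (absSeminorm g hg) :=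
  g.continuous.comp (continuous_id.sup continuous_neg)

variable (g : E →L[ℝ] ℝ) {y z : E}

theorem apply_le_norm_mul_of_nonneg_of_le {w : E} (hw : 0 ≤ w) (hwz : w ≤ z) : g w ≤ ‖g‖ * ‖z‖ := by
  have hwz' : ‖w‖ ≤ ‖z‖ :=
    HasSolidNorm.solid (by rwa [abs_of_nonneg hw, abs_of_nonneg (hw.trans hwz)])
  exact (le_abs_self _).trans ((g.le_opNorm w).trans (by gcongr))

theorem apply_le_rieszSup {w : E} (hw : 0 ≤ w) (hwz : w ≤ z) : g w ≤ rieszSup g z :=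
  le_csSup ⟨‖g‖ * ‖z‖, by
    rintro _ ⟨w, ⟨hw, hwz⟩, rfl⟩
    exact apply_le_norm_mul_of_nonneg_of_le g hw hwz⟩ ⟨w, ⟨hw, hwz⟩, rfl⟩

theorem rieszSup_nonneg (hz : 0 ≤ z) : 0 ≤ rieszSup g z := by
  simpa using apply_le_rieszSup g le_rfl hz

-- This is the Riesz decomposition property `[0, y + z] = [0, y] + [0, z]`.
theorem rieszSup_add (hy : 0 ≤ y) (hz : 0 ≤ z) :
    rieszSup g (y + z) = rieszSup g y + rieszSup g z := by
  refine le_antisymm (rieszSup_le g (add_nonneg hy hz) fun w hw hwyz => ?_) ?_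
  · have hw' : w - w ⊓ y ≤ z := by
      rw [sub_inf, sub_self]
      exact sup_le hz (sub_le_iff_le_add'.2 hwyz)
    calc g w = g (w ⊓ y) + g (w - w ⊓ y) := by rw [← map_add, add_sub_cancel]
      _ ≤ rieszSup g y + rieszSup g z :=
        add_le_add (apply_le_rieszSup g (le_inf hw hy) inf_le_right)
          (apply_le_rieszSup g (sub_nonneg.2 inf_le_left) hw')
  · rw [← le_sub_iff_add_le']
    refine rieszSup_le g hz fun w₂ hw₂ hw₂z => le_sub_comm.1 ?_
    refine rieszSup_le g hy fun w₁ hw₁ hw₁y => le_sub_iff_add_le.2 ?_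
    rw [← map_add]
    exact apply_le_rieszSup g (add_nonneg hw₁ hw₂) (add_le_add hw₁y hw₂z)

def rieszPosPartHom : E →+ ℝ :=
  AddMonoidHom.mk' (fun y => rieszSup g y⁺ - rieszSup g y⁻) fun a b => by
    have h : (a + b)⁺ + (a⁻ + b⁻) = (a⁺ + b⁺) + (a + b)⁻ := sub_eq_sub_iff_add_eq_add.1 <| by
      rw [posPart_sub_negPart, add_sub_add_comm, posPart_sub_negPart, posPart_sub_negPart]
    have := congrArg (rieszSup g) h
    rw [rieszSup_add g (posPart_nonneg _) (add_nonneg (negPart_nonneg _) (negPart_nonneg _)),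
      rieszSup_add g (add_nonneg (posPart_nonneg _) (posPart_nonneg _)) (negPart_nonneg _),
      rieszSup_add g (negPart_nonneg a) (negPart_nonneg b),
      rieszSup_add g (posPart_nonneg a) (posPart_nonneg b)] at this
    linarith

theorem norm_rieszPosPartHom_le (y : E) : ‖rieszPosPartHom g y‖ ≤ 2 * ‖g‖ * ‖y‖ := by
  have hle {w : E} (hw : 0 ≤ w) (hwy : w ≤ |y|) : rieszSup g w ≤ ‖g‖ * ‖y‖ := by
    rw [← norm_abs_eq_norm y]
    exact rieszSup_le g hw fun v hv hvw => apply_le_norm_mul_of_nonneg_of_le g hv (hvw.trans hwy)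
  have h₁ := hle (posPart_nonneg y)
    (posPart_add_negPart y ▸ le_add_of_nonneg_right (negPart_nonneg y))
  have h₂ := hle (negPart_nonneg y)
    (posPart_add_negPart y ▸ le_add_of_nonneg_left (posPart_nonneg y))
  have h₃ := rieszSup_nonneg g (posPart_nonneg y)
  have h₄ := rieszSup_nonneg g (negPart_nonneg y)
  rw [Real.norm_eq_abs, abs_le]
  constructor <;> simp only [rieszPosPartHom, AddMonoidHom.mk'_apply] <;> linarith

def rieszPosPart : E →L[ℝ] ℝ :=
  (rieszPosPartHom g).toRealLinearMap
    (AddMonoidHomClass.continuous_of_bound _ _ (norm_rieszPosPartHom_le g))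

theorem rieszPosPart_apply_of_nonneg (hz : 0 ≤ z) : rieszPosPart g z = rieszSup g z := by
  change rieszSup g z⁺ - rieszSup g z⁻ = _
  rw [posPart_eq_self.2 hz, negPart_eq_zero.2 hz, sub_eq_self]
  exact le_antisymm (rieszSup_le g le_rfl fun w hw hw0 => by simp [le_antisymm hw0 hw])
    (rieszSup_nonneg g le_rfl)

theorem monotone_rieszPosPart : Monotone (rieszPosPart g) :=
  (monotone_iff_map_nonneg _).2 fun _ hz => by
    rw [rieszPosPart_apply_of_nonneg g hz]
    exact rieszSup_nonneg g hz

theorem apply_le_rieszPosPart (hz : 0 ≤ z) : g z ≤ rieszPosPart g z := by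
  rw [rieszPosPart_apply_of_nonneg g hz]
  exact apply_le_rieszSup g hz le_rfl

def rieszAbs : E →L[ℝ] ℝ := rieszPosPart g + rieszPosPart (-g)

theorem monotone_rieszAbs : Monotone (rieszAbs g) :=
  (monotone_iff_map_nonneg _).2 fun _ hz =>
    add_nonneg ((monotone_iff_map_nonneg _).1 (monotone_rieszPosPart g) _ hz)
      ((monotone_iff_map_nonneg _).1 (monotone_rieszPosPart (-g)) _ hz)

theorem apply_le_rieszAbs (y : E) : g y ≤ rieszAbs g |y| := by
  have h₁ := apply_le_rieszPosPart g (posPart_nonneg y)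
  have h₂ := apply_le_rieszPosPart (-g) (negPart_nonneg y)
  have h₃ := monotone_rieszPosPart g
    (posPart_add_negPart y ▸ le_add_of_nonneg_right (negPart_nonneg y))
  have h₄ := monotone_rieszPosPart (-g)
    (posPart_add_negPart y ▸ le_add_of_nonneg_left (posPart_nonneg y))
  have h₅ : g y = g y⁺ - g y⁻ := by rw [← map_sub, posPart_sub_negPart]
  rw [neg_apply] at h₂
  rw [rieszAbs, add_apply]
  linarith

theorem abs_apply_le_rieszAbs (y : E) : |g y| ≤ rieszAbs g |y| := by
  have h := apply_le_rieszAbs (-g) y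
  rw [rieszAbs, neg_neg, add_comm, neg_apply] at h
  exact abs_le.2 ⟨neg_le.1 h, apply_le_rieszAbs g y⟩

end NormedLattice

section OrderContinuousDual

variable {E : Type*} [NormedAddCommGroup E] [Lattice E] [HasSolidNorm E] [IsOrderedAddMonoid E]
  [NormedSpace ℝ E]

theorem inOCDual_rieszPosPart {g : E →L[ℝ] ℝ} (hg : InOCDual g) :
    InOCDual (rieszPosPart g) := by
  rintro D u ⟨F, h, hanti, hglb, hdom⟩ ε hε
  have h0 (γ : F.ι) : 0 ≤ h γ := hglb.1 ⟨γ, rfl⟩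
  -- otherwise points `w γ ∈ [0, h γ]` with `g (w γ) > ε / 2` would order converge to `0`
  obtain ⟨γ, hγ⟩ : ∃ γ, rieszSup g (h γ) < ε := by
    by_contra! hbig
    choose w hw0 hwh hw using fun γ => exists_rieszSup_sub_lt_apply g (h0 γ) (half_pos hε)
    have hwconv : OrderConvNet F w 0 := ⟨F, h, hanti, hglb, fun γ => ⟨γ, fun γ' hγ' => by
      simpa [abs_of_nonneg (hw0 γ')] using (hwh γ').trans (hanti γ γ' hγ')⟩⟩
    obtain ⟨γ, hγ⟩ := hg F w hwconv (ε / 2) (half_pos hε)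
    linarith [hγ γ (F.refl γ), hbig γ, hw γ, le_abs_self (g (w γ))]
  obtain ⟨i₀, hi₀⟩ := hdom γ
  refine ⟨i₀, fun i hi => ?_⟩
  calc |rieszPosPart g (u i)| ≤ rieszPosPart g |u i| :=
        abs_apply_le_apply_abs (monotone_rieszPosPart g) _
    _ ≤ rieszPosPart g (h γ) := monotone_rieszPosPart g (by simpa using hi₀ i hi)
    _ < ε := by rwa [rieszPosPart_apply_of_nonneg g (h0 γ)]

theorem inOCDual_rieszAbs {g : E →L[ℝ] ℝ} (hg : InOCDual g) : InOCDual (rieszAbs g) :=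
  (ocDualSubmodule E).add_mem (inOCDual_rieszPosPart hg)
    (inOCDual_rieszPosPart ((ocDualSubmodule E).neg_mem hg))

theorem exists_split_of_forall_dualLE {g₀ h ψ : E →L[ℝ] ℝ} (hh : Monotone h)
    (hψ : ∀ c : ℕ, dualLE ψ (rieszPosPart (h - (c : ℝ) • g₀))) {v : E} (hv : 0 ≤ v) {δ : ℝ}
    (hδ : 0 < δ) : ∃ u, 0 ≤ u ∧ u ≤ v ∧ ψ (v - u) < δ ∧ g₀ u < δ := by
  obtain ⟨c, hc⟩ := exists_nat_gt ((h v + δ) / δ)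
  set G := h - (c : ℝ) • g₀
  obtain ⟨u, hu0, huv, hu⟩ := exists_rieszSup_sub_lt_apply G hv hδ
  refine ⟨u, hu0, huv, ?_, ?_⟩
  · have hsplit := rieszSup_add G hu0 (sub_nonneg.2 huv)
    rw [add_sub_cancel] at hsplit
    have := apply_le_rieszSup G hu0 le_rfl
    calc ψ (v - u) ≤ rieszPosPart G (v - u) := hψ c _ (sub_nonneg.2 huv)
      _ = rieszSup G (v - u) := rieszPosPart_apply_of_nonneg G (sub_nonneg.2 huv)
      _ < δ := by linarith
  · -- `G u > -δ`, so `c g₀ u < h u + δ ≤ h v + δ < c δ`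
    have hGu : G u = h u - c * g₀ u := by simp [G]
    have := rieszSup_nonneg G hv
    have := hh huv
    rw [div_lt_iff₀ hδ] at hc
    exact lt_of_mul_lt_mul_left (by linarith) (Nat.cast_nonneg c)

theorem exists_antitone_seq_of_forall_dualLE {g₀ h ψ : E →L[ℝ] ℝ} (hh : Monotone h)
    (hψ : ∀ c : ℕ, dualLE ψ (rieszPosPart (h - (c : ℝ) • g₀))) {z : E} (hz : 0 ≤ z)
    {δ : ℕ → ℝ} (hδ : ∀ n, 0 < δ n) : ∃ p : ℕ → E, p 0 = z ∧ Antitone p ∧ (∀ n, 0 ≤ p n) ∧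
      ∀ n, ψ (p n - p (n + 1)) < δ n ∧ g₀ (p (n + 1)) < δ n := by
  choose! F hF0 hFle hFψ hFg using fun n (v : E) (hv : 0 ≤ v) =>
    exists_split_of_forall_dualLE hh hψ hv (hδ n)
  let p : ℕ → E := fun n => Nat.rec z F n
  have hp0 (n : ℕ) : 0 ≤ p n := by
    induction n with
    | zero => exact hz
    | succ n ih => exact hF0 n (p n) ih
  exact ⟨p, rfl, antitone_nat_of_succ_le fun n => hFle n _ (hp0 n), hp0,
    fun n => ⟨hFψ n _ (hp0 n), hFg n _ (hp0 n)⟩⟩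

theorem dualLE_zero_of_forall_dualLE_rieszPosPart {g₀ h ψ : E →L[ℝ] ℝ}
    (hg₀ : ∀ x : E, x ≠ 0 → 0 < g₀ |x|) (hh : Monotone h)
    (hψ : ∀ c : ℕ, dualLE ψ (rieszPosPart (h - (c : ℝ) • g₀))) (hψoc : InOCDual ψ) :
    dualLE ψ 0 := by
  intro z hz
  rw [zero_apply]
  by_contra! hzpos
  set ε := ψ z
  set δ : ℕ → ℝ := fun n => ε / 4 * (1 / 2) ^ n
  obtain ⟨p, rfl, hanti, hp0, hstep⟩ :=
    exists_antitone_seq_of_forall_dualLE hh hψ hz (δ := δ) fun n => by positivity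
  have hδlim : Tendsto δ atTop (𝓝 0) := by
    simpa [δ] using (tendsto_pow_atTop_nhds_zero_of_lt_one (by norm_num) (by norm_num :
      (1 / 2 : ℝ) < 1)).const_mul (ε / 4)
  have hg₀p : Tendsto (fun n => g₀ (p n)) atTop (𝓝 0) :=
    (tendsto_add_atTop_iff_nat 1).1 <| squeeze_zero
      (fun n => (monotone_iff_map_nonneg g₀).1 (monotone_of_strictlyPositive hg₀) _ (hp0 _))
      (fun n => (hstep n).2.le) hδlim
  have hψp : Tendsto (fun n => ψ (p n)) atTop (𝓝 0) :=
    netTendstoZero_iff_tendsto.1 (hψoc natDir p (orderConvNet_zero_of_antitone hg₀ hanti hp0 hg₀p))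
  have htelescope (n : ℕ) : ψ (p 0) ≤ ψ (p n) + ε / 2 * (1 - (1 / 2) ^ n) := by
    induction n with
    | zero => simp
    | succ n ih =>
      have := (hstep n).1
      rw [map_sub] at this
      simp only [δ, pow_succ] at this ⊢
      linarith
  obtain ⟨n, hn⟩ := (hψp.eventually (gt_mem_nhds (half_pos hzpos))).exists
  have := htelescope n
  have : (0 : ℝ) ≤ (1 / 2) ^ n := by positivity
  nlinarith

theorem tendsto_norm_rieszPosPart_sub_smul (hoc : OCDualOrderContinuous E) {g₀ : E →L[ℝ] ℝ}
    (hg₀ : InOCDual g₀) (hg₀pos : ∀ x : E, x ≠ 0 → 0 < g₀ |x|) {h : E →L[ℝ] ℝ}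
    (hh : InOCDual h) (hhm : Monotone h) :
    Tendsto (fun c : ℕ => ‖rieszPosPart (h - (c : ℝ) • g₀)‖) atTop (𝓝 0) := by
  refine netTendstoZero_iff_tendsto.1 (hoc natDir _ (fun c => inOCDual_rieszPosPart
    ((ocDualSubmodule E).sub_mem hh ((ocDualSubmodule E).smul_mem _ hg₀))) ?_ ?_
    fun ψ hψ hle => dualLE_zero_of_forall_dualLE_rieszPosPart hg₀pos hhm hle hψ)
  · intro (i : ℕ) (j : ℕ) hij v hv
    rw [rieszPosPart_apply_of_nonneg _ hv, rieszPosPart_apply_of_nonneg _ hv]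
    refine rieszSup_le _ hv fun w hw hwv => le_trans ?_ (apply_le_rieszSup _ hw hwv)
    have := (monotone_iff_map_nonneg g₀).1 (monotone_of_strictlyPositive hg₀pos) w hw
    have : (i : ℝ) ≤ j := Nat.cast_le.2 hij
    simp only [sub_apply, smul_apply, smul_eq_mul]
    nlinarith
  · intro c v hv
    simpa using (monotone_iff_map_nonneg _).1 (monotone_rieszPosPart _) v hv

theorem tendsto_apply_of_tendsto_strictlyPositive (hoc : OCDualOrderContinuous E)
    {g₀ : E →L[ℝ] ℝ} (hg₀ : InOCDual g₀) (hg₀pos : ∀ x : E, x ≠ 0 → 0 < g₀ |x|)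
    {g : E →L[ℝ] ℝ} (hg : InOCDual g) {y : ℕ → E} (hy0 : ∀ n, 0 ≤ y n) {M : ℝ}
    (hyM : ∀ n, ‖y n‖ ≤ M) (hg₀y : Tendsto (fun n => g₀ (y n)) atTop (𝓝 0)) :
    Tendsto (fun n => g (y n)) atTop (𝓝 0) := by
  set h := rieszAbs g
  have hbound (c n : ℕ) : h (y n) ≤ ‖rieszPosPart (h - (c : ℝ) • g₀)‖ * M + c * g₀ (y n) := by
    have h₁ := apply_le_rieszPosPart (h - (c : ℝ) • g₀) (hy0 n)
    have h₂ := (le_abs_self _).trans ((rieszPosPart (h - (c : ℝ) • g₀)).le_opNorm (y n))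
    have h₃ := mul_le_mul_of_nonneg_left (hyM n) (norm_nonneg (rieszPosPart (h - (c : ℝ) • g₀)))
    simp only [sub_apply, smul_apply, smul_eq_mul] at h₁
    linarith
  have hlim : Tendsto (fun n => h (y n)) atTop (𝓝 0) :=
    tendsto_zero_of_forall_le_add
      (fun n => (monotone_iff_map_nonneg _).1 (monotone_rieszAbs g) _ (hy0 n))
      (by simpa using (tendsto_norm_rieszPosPart_sub_smul hoc hg₀ hg₀pos (inOCDual_rieszAbs hg)
        (monotone_rieszAbs g)).mul_const M) hg₀y hbound
  refine squeeze_zero_norm (fun n => ?_) hlim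
  simpa [abs_of_nonneg (hy0 n)] using abs_apply_le_rieszAbs g (y n)

theorem exists_mem_apply_abs_sub_lt_of_mem_sigmaNClosure {g₀ : E →L[ℝ] ℝ} (hg₀ : InOCDual g₀)
    (hg₀m : Monotone g₀) {C : Set E} (hC : Convex ℝ C) {x : E} (hx : x ∈ SigmaNClosure C)
    {ε : ℝ} (hε : 0 < ε) : ∃ c ∈ C, g₀ |c - x| < ε := by
  by_contra! hfar
  obtain ⟨f, K, δ, hfK, hδ, hsep⟩ :=
    exists_dual_dominated_separating (continuous_absSeminorm g₀ hg₀m) hC hε hfar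
  obtain ⟨D, u, huC, hu⟩ := hx
  obtain ⟨i, hi⟩ := hu f (hg₀.of_abs_le hfK) δ hδ
  linarith [hsep _ (huC i), neg_abs_le (f (u i) - f x), hi i (D.refl i)]

theorem absSigmaSeqClosure_subset_sigmaNClosure (C : Set E) :
    AbsSigmaSeqClosure C ⊆ SigmaNClosure C := by
  rintro x ⟨s, hsC, hs⟩
  refine ⟨natDir, s, hsC, fun g hg => netTendstoZero_iff_tendsto.2 ?_⟩
  refine squeeze_zero_norm (fun n => ?_) (hs _ (inOCDual_rieszAbs hg))
  rw [Real.norm_eq_abs, ← map_sub]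
  exact abs_apply_le_rieszAbs g _

end OrderContinuousDual

theorem stmt14_general {X : Type*} [NormedAddCommGroup X] [Lattice X] [HasSolidNorm X] [IsOrderedAddMonoid X] [NormedSpace ℝ X]
    (hoc : OCDualOrderContinuous X) (hsp : HasStrictlyPositiveOCFunctional X)
    (C : Set X) (hC : Convex ℝ C) (hbdd : ∃ M : ℝ, ∀ x ∈ C, ‖x‖ ≤ M) :
    SigmaNClosure C = AbsSigmaSeqClosure C := by
  obtain ⟨g₀, hg₀, hg₀pos⟩ := hsp
  obtain ⟨M, hM⟩ := hbdd
  have hg₀m := monotone_of_strictlyPositive hg₀pos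
  refine subset_antisymm (fun x hx => ?_) (absSigmaSeqClosure_subset_sigmaNClosure C)
  choose s hsC hs using fun n : ℕ => exists_mem_apply_abs_sub_lt_of_mem_sigmaNClosure hg₀ hg₀m hC
    hx (Nat.one_div_pos_of_nat (n := n))
  refine ⟨s, hsC, fun g hg => tendsto_apply_of_tendsto_strictlyPositive hoc hg₀ hg₀pos hg
    (fun n => abs_nonneg _) (M := M + ‖x‖) (fun n => ?_) ?_⟩
  · rw [norm_abs_eq_norm]
    exact (norm_sub_le _ _).trans (by gcongr; exact hM _ (hsC n))
  · exact squeeze_zero (fun n => (monotone_iff_map_nonneg g₀).1 hg₀m _ (abs_nonneg _))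
      (fun n => (hs n).le) tendsto_one_div_add_atTop_nhds_zero_nat

/-- if `X_n^~` is order continuous and contains a strictly positive
element, then for every norm bounded convex set `C`, the `σ(X, X_n^~)`-closure of
`C` equals its `|σ|(X, X_n^~)`-sequential closure. -/
theorem stmt14 {X : Type*} [NormedAddCommGroup X] [Lattice X] [HasSolidNorm X] [IsOrderedAddMonoid X] [NormedSpace ℝ X] [CompleteSpace X]
    (hoc : OCDualOrderContinuous X) (hsp : HasStrictlyPositiveOCFunctional X)
    (C : Set X) (hC : Convex ℝ C) (hbdd : ∃ M : ℝ, ∀ x ∈ C, ‖x‖ ≤ M) :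
    SigmaNClosure C = AbsSigmaSeqClosure C :=
  stmt14_general hoc hsp C hC hbdd
end
end

section
/- Let X be a Banach lattice with the property that every norm bounded order closed convex set is |σ|(X, X_n^~)-sequentially closed (property P4). If (f_n) is a norm bounded disjoint sequence in X₊ equivalent to the unit vector basis of ℓ¹, then the order closure of co({f_n}) equals its |σ|(X, X_n^~)-sequential closure. -/
open Filter Topology Pointwise

noncomputable section

variable {X : Type*} [NormedAddCommGroup X] [Lattice X] [HasSolidNorm X] [IsOrderedAddMonoid X] [NormedSpace ℝ X]

variable (X)

variable {X}

section AuxLemmas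

set_option linter.unusedSectionVars false

lemma aux_inf_add_le {a b c : X} (ha : 0 ≤ a) (hb : 0 ≤ b) (hc : 0 ≤ c) :
    (a + b) ⊓ c ≤ a ⊓ c + b ⊓ c := by
  have h1 : a ⊓ c + b ⊓ c = ((a + b) ⊓ (c + b)) ⊓ ((a + c) ⊓ (c + c)) := by
    rw [add_inf, inf_add, inf_add]
  rw [h1]
  refine le_inf (le_inf inf_le_left ?_) (le_inf ?_ ?_)
  · exact inf_le_right.trans (le_add_of_nonneg_right hb)
  · exact inf_le_right.trans (le_add_of_nonneg_left ha)
  · exact inf_le_right.trans (le_add_of_nonneg_left hc)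

lemma aux_disjoint_add {a b c : X} (ha : 0 ≤ a) (hb : 0 ≤ b) (hc : 0 ≤ c)
    (h1 : a ⊓ c = 0) (h2 : b ⊓ c = 0) : (a + b) ⊓ c = 0 :=
  le_antisymm (by simpa [h1, h2] using aux_inf_add_le ha hb hc)
    (le_inf (add_nonneg ha hb) hc)

lemma aux_inf_eq_of_disjoint {u v w : X} (hu : 0 ≤ u) (hv : 0 ≤ v) (hw : 0 ≤ w)
    (hvw : v ⊓ w = 0) : (u + v) ⊓ w = u ⊓ w := by
  refine le_antisymm (by simpa [hvw] using aux_inf_add_le hu hv hw) ?_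
  exact le_inf (inf_le_left.trans (le_add_of_nonneg_right hv)) inf_le_right

lemma aux_nsmul_inf_zero {a b : X} (ha : 0 ≤ a) (hb : 0 ≤ b) (h : a ⊓ b = 0) (n : ℕ) :
    (n • a) ⊓ b = 0 := by
  induction n with
  | zero => simpa using inf_eq_right.mpr hb ▸ (by simp [inf_comm, inf_eq_left.mpr hb])
  | succ n ih =>
      rw [succ_nsmul]
      exact aux_disjoint_add (nsmul_nonneg ha n) ha hb ih h

lemma aux_two_nsmul_semiclosed {a : X} (h : 0 ≤ 2 • a) : 0 ≤ a := by
  have h2 : (0:X) ≤ a + a := by simpa [two_smul] using h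
  have key : a ⊓ 0 + a ⊓ 0 = a ⊓ 0 := by
    rw [add_inf, inf_add, inf_add]
    simp only [zero_add, add_zero]
    rw [inf_assoc, inf_left_idem]
    exact inf_eq_right.mpr (inf_le_right.trans h2)
  have h0 : a ⊓ 0 = 0 := add_eq_right.mp key
  exact inf_eq_right.mp h0

lemma aux_two_pow_semiclosed {a : X} (k : ℕ) (h : 0 ≤ (2 ^ k) • a) : 0 ≤ a := by
  induction k generalizing a with
  | zero => simpa using h
  | succ k ih =>
      apply ih
      apply aux_two_nsmul_semiclosed
      rw [← mul_smul, ← pow_succ']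
      exact h

lemma aux_smul_nonneg {c : ℝ} (hc : 0 ≤ c) {x : X} (hx : 0 ≤ x) : 0 ≤ c • x := by
  set q : ℕ → ℝ := fun k => (⌊c * 2 ^ k⌋₊ : ℝ) / 2 ^ k with hq
  have hqk : ∀ k, 0 ≤ q k • x := by
    intro k
    apply aux_two_pow_semiclosed k
    have : (2 ^ k : ℕ) • (q k • x) = (⌊c * 2 ^ k⌋₊ : ℕ) • x := by
      rw [← Nat.cast_smul_eq_nsmul ℝ, ← Nat.cast_smul_eq_nsmul ℝ (⌊c * 2 ^ k⌋₊), smul_smul]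
      congr 1
      simp only [hq]
      push_cast
      field_simp
    rw [this]
    exact nsmul_nonneg hx _
  have hqc : Tendsto q atTop (𝓝 c) := by
    have hle : ∀ k, |q k - c| ≤ (1 / 2) ^ k := by
      intro k
      have h2 : (0:ℝ) < 2 ^ k := by positivity
      have hfl : (⌊c * 2 ^ k⌋₊ : ℝ) ≤ c * 2 ^ k := Nat.floor_le (by positivity)
      have hfl2 : c * 2 ^ k < ⌊c * 2 ^ k⌋₊ + 1 := Nat.lt_floor_add_one _
      have hqle : q k ≤ c := by
        rw [hq]
        simpa using (div_le_iff₀ h2).mpr hfl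
      rw [abs_sub_comm, abs_of_nonneg (sub_nonneg.mpr hqle), sub_le_iff_le_add, hq]
      have hpow : (1 / 2 : ℝ) ^ k = 1 / 2 ^ k := by rw [div_pow, one_pow]
      rw [hpow]
      simp only []
      rw [← add_div]
      rw [le_div_iff₀ h2]
      linarith
    have h0 : Tendsto (fun k : ℕ => (1 / 2 : ℝ) ^ k) atTop (𝓝 0) :=
      tendsto_pow_atTop_nhds_zero_of_lt_one (by norm_num) (by norm_num)
    have hsub : Tendsto (fun k => q k - c) atTop (𝓝 0) :=
      squeeze_zero_norm (by simpa [Real.norm_eq_abs] using hle) h0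
    have := hsub.add (tendsto_const_nhds (x := c))
    simpa using this
  have : Tendsto (fun k => q k • x) atTop (𝓝 (c • x)) := hqc.smul_const x
  exact le_of_tendsto_of_tendsto' tendsto_const_nhds this hqk

lemma aux_smul_le_smul {c d : ℝ} (h : c ≤ d) {x : X} (hx : 0 ≤ x) : c • x ≤ d • x := by
  have := aux_smul_nonneg (sub_nonneg.mpr h) hx
  rw [sub_smul] at this
  exact sub_nonneg.mp this

lemma aux_smul_le_smul_left {c : ℝ} (hc : 0 ≤ c) {x y : X} (h : x ≤ y) : c • x ≤ c • y := by
  have := aux_smul_nonneg hc (sub_nonneg.mpr h)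
  rw [smul_sub] at this
  exact sub_nonneg.mp this

lemma aux_abs_smul_of_nonneg (c : ℝ) {x : X} (hx : 0 ≤ x) : |c • x| = |c| • x := by
  rcases le_total 0 c with hc | hc
  · rw [abs_of_nonneg (aux_smul_nonneg hc hx), abs_of_nonneg hc]
  · have h1 : c • x ≤ 0 := by
      have := aux_smul_nonneg (neg_nonneg.mpr hc) hx
      rw [neg_smul] at this
      exact neg_nonneg.mp this
    rw [abs_of_nonpos h1, abs_of_nonpos hc, neg_smul]

lemma aux_smul_inf_smul_zero {c d : ℝ} (hc : 0 ≤ c) (hd : 0 ≤ d) {a b : X}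
    (ha : 0 ≤ a) (hb : 0 ≤ b) (h : a ⊓ b = 0) : (c • a) ⊓ (d • b) = 0 := by
  have h1 : ((⌈c⌉₊ : ℕ) • a) ⊓ b = 0 := aux_nsmul_inf_zero ha hb h _
  have h2 : ((⌈d⌉₊ : ℕ) • b) ⊓ ((⌈c⌉₊ : ℕ) • a) = 0 := by
    rw [inf_comm] at h1
    exact aux_nsmul_inf_zero hb (nsmul_nonneg ha _) h1 _
  rw [inf_comm] at h2
  refine le_antisymm ?_ (le_inf (aux_smul_nonneg hc ha) (aux_smul_nonneg hd hb))
  calc (c • a) ⊓ (d • b) ≤ ((⌈c⌉₊ : ℕ) • a) ⊓ ((⌈d⌉₊ : ℕ) • b) := by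
        refine inf_le_inf ?_ ?_
        · rw [← Nat.cast_smul_eq_nsmul ℝ]
          exact aux_smul_le_smul (Nat.le_ceil c) ha
        · rw [← Nat.cast_smul_eq_nsmul ℝ]
          exact aux_smul_le_smul (Nat.le_ceil d) hb
    _ = 0 := h2

lemma aux_inf_smul_zero {c : ℝ} (hc : 0 ≤ c) {a b : X}
    (ha : 0 ≤ a) (hb : 0 ≤ b) (h : a ⊓ b = 0) : a ⊓ (c • b) = 0 := by
  have h1 := aux_smul_inf_smul_zero (le_of_lt one_pos) hc ha hb h
  simpa using h1

lemma aux_norm_posPart_le (a : X) : ‖a⁺‖ ≤ ‖a‖ := by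
  apply HasSolidNorm.solid
  rw [abs_of_nonneg (posPart_nonneg a)]
  exact sup_le (le_abs_self a) (abs_nonneg a)

lemma aux_norm_le_of_nonneg_le {a b : X} (ha : 0 ≤ a) (hab : a ≤ b) : ‖a‖ ≤ ‖b‖ := by
  apply HasSolidNorm.solid
  rw [abs_of_nonneg ha, abs_of_nonneg (ha.trans hab)]
  exact hab

lemma aux_le_of_forall_eps {v w : X} (h : ∀ ε : ℝ, 0 < ε → ∃ u : X, v ≤ w + u ∧ ‖u‖ ≤ ε) :
    v ≤ w := by
  have hz : (v - w)⁺ = 0 := by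
    have hn : ∀ ε : ℝ, 0 < ε → ‖(v - w)⁺‖ ≤ ε := by
      intro ε hε
      obtain ⟨u, hvu, hu⟩ := h ε hε
      have h1 : (v - w)⁺ ≤ u⁺ := posPart_mono (sub_le_iff_le_add'.mpr hvu)
      have h2 : ‖(v - w)⁺‖ ≤ ‖u⁺‖ := by
        apply HasSolidNorm.solid
        rw [abs_of_nonneg (posPart_nonneg _), abs_of_nonneg (posPart_nonneg _)]
        exact h1
      exact h2.trans ((aux_norm_posPart_le u).trans hu)
    have : ‖(v - w)⁺‖ = 0 := by
      by_contra hne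
      have hpos : 0 < ‖(v - w)⁺‖ := lt_of_le_of_ne (norm_nonneg _) (Ne.symm hne)
      linarith [hn (‖(v - w)⁺‖ / 2) (by linarith)]
    rwa [norm_eq_zero] at this
  exact sub_nonpos.mp (posPart_eq_zero.mp hz)

lemma aux_le_of_glb {E : DirectedType} {h : E.ι → X} (hglb : IsGLB (Set.range h) 0)
    {v : X} (hv : ∀ γ, v ≤ h γ) : v ≤ 0 :=
  hglb.2 (by rintro _ ⟨γ, rfl⟩; exact hv γ)


def auxF (D : DirectedType) : Filter D.ι := ⨅ i₀, Filter.principal {i | D.r i₀ i}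

lemma auxF_dir (D : DirectedType) :
    Directed (· ≥ ·) (fun i₀ => (Filter.principal {i | D.r i₀ i} : Filter D.ι)) := by
  intro a b
  obtain ⟨c, hac, hbc⟩ := D.directed a b
  exact ⟨c, Filter.principal_mono.mpr (fun i hi => D.trans _ _ _ hac hi),
    Filter.principal_mono.mpr (fun i hi => D.trans _ _ _ hbc hi)⟩

lemma auxF_neBot (D : DirectedType) : (auxF D).NeBot := by
  have : Nonempty D.ι := D.nonempty
  refine Filter.iInf_neBot_of_directed (auxF_dir D) ?_
  intro i₀
  exact Filter.principal_neBot_iff.mpr ⟨i₀, D.refl i₀⟩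

lemma auxF_mem (D : DirectedType) (i₀ : D.ι) : {i | D.r i₀ i} ∈ auxF D :=
  Filter.le_principal_iff.mp (iInf_le _ i₀)

lemma auxF_eventually {D : DirectedType} {p : D.ι → Prop} :
    (∀ᶠ i in auxF D, p i) ↔ ∃ i₀, ∀ i, D.r i₀ i → p i := by
  have : Nonempty D.ι := D.nonempty
  constructor
  · intro h
    rw [Filter.Eventually, auxF, Filter.mem_iInf_of_directed (auxF_dir D)] at h
    obtain ⟨i₀, hi₀⟩ := h
    exact ⟨i₀, fun i hi => Filter.mem_principal.mp hi₀ hi⟩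
  · rintro ⟨i₀, hi₀⟩
    exact Filter.mem_of_superset (auxF_mem D i₀) hi₀

lemma aux_net_limit {D : DirectedType} (c : D.ι → ℝ)
    (H : ∀ ε : ℝ, 0 < ε → ∃ i₀, ∀ i j, D.r i₀ i → D.r i₀ j → |c i - c j| < ε) :
    ∃ L, Filter.Tendsto c (auxF D) (𝓝 L) := by
  have hne : (auxF D).NeBot := auxF_neBot D
  have hc : Cauchy (Filter.map c (auxF D)) := by
    rw [Metric.cauchy_iff]
    refine ⟨Filter.map_neBot, ?_⟩
    intro ε hε
    obtain ⟨i₀, hi₀⟩ := H ε hε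
    refine ⟨c '' {i | D.r i₀ i}, ?_, ?_⟩
    · rw [Filter.mem_map]
      exact Filter.mem_of_superset (auxF_mem D i₀) (Set.subset_preimage_image c _)
    · rintro x ⟨i, hi, rfl⟩ y ⟨j, hj, rfl⟩
      rw [Real.dist_eq]
      exact hi₀ i j hi hj
  exact CompleteSpace.complete hc

lemma aux_finsum_inf_zero {w : X} (hw : 0 ≤ w) {s : Finset ℕ} {g : ℕ → X}
    (hg : ∀ k ∈ s, 0 ≤ g k) (hd : ∀ k ∈ s, g k ⊓ w = 0) : (∑ k ∈ s, g k) ⊓ w = 0 := by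
  induction s using Finset.induction with
  | empty => simpa using inf_eq_left.mpr hw
  | insert _ _ hns ih =>
      rw [Finset.sum_insert hns]
      refine aux_disjoint_add (hg _ (Finset.mem_insert_self _ _))
        (Finset.sum_nonneg (fun k hk => hg k (Finset.mem_insert_of_mem hk))) hw
        (hd _ (Finset.mem_insert_self _ _)) ?_
      exact ih (fun k hk => hg k (Finset.mem_insert_of_mem hk))
        (fun k hk => hd k (Finset.mem_insert_of_mem hk))

lemma aux_sum_disj_le {g : ℕ → X} {v : X} (hg0 : ∀ j, 0 ≤ g j) (hgv : ∀ j, g j ≤ v)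
    (hdis : ∀ j l, j ≠ l → g j ⊓ g l = 0) (N : ℕ) : ∑ j ∈ Finset.range N, g j ≤ v := by
  induction N with
  | zero => simpa using (hg0 0).trans (hgv 0)
  | succ N ih =>
      rw [Finset.sum_range_succ]
      have hdisj : (∑ j ∈ Finset.range N, g j) ⊓ g N = 0 :=
        aux_finsum_inf_zero (hg0 N) (fun k _ => hg0 k)
          (fun k hk => hdis k N (Finset.mem_range.mp hk).ne)
      have key : (∑ j ∈ Finset.range N, g j) + g N = (∑ j ∈ Finset.range N, g j) ⊔ g N := by
        have h2 := inf_add_sup (∑ j ∈ Finset.range N, g j) (g N)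
        rw [hdisj, zero_add] at h2
        exact h2.symm
      rw [key]
      exact sup_le ih (hgv N)

lemma aux_blocks_disjoint {f : ℕ → X} (hpos : ∀ n, 0 ≤ f n)
    (hdisj : ∀ n m, n ≠ m → f n ⊓ f m = 0) {c d : ℕ → ℝ}
    (hc : ∀ k, 0 ≤ c k) (hd0 : ∀ k, 0 ≤ d k) (hsupp : ∀ k, c k = 0 ∨ d k = 0)
    (s t : Finset ℕ) : (∑ k ∈ s, c k • f k) ⊓ (∑ k ∈ t, d k • f k) = 0 := by
  have hdnn : (0:X) ≤ ∑ k ∈ t, d k • f k :=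
    Finset.sum_nonneg fun k _ => aux_smul_nonneg (hd0 k) (hpos k)
  refine aux_finsum_inf_zero hdnn (fun k _ => aux_smul_nonneg (hc k) (hpos k)) ?_
  intro k _
  rw [inf_comm]
  refine aux_finsum_inf_zero (aux_smul_nonneg (hc k) (hpos k))
    (fun l _ => aux_smul_nonneg (hd0 l) (hpos l)) ?_
  intro l _
  rcases eq_or_ne l k with rfl | hlk
  · rcases hsupp l with h | h
    · rw [h]
      simp only [zero_smul, inf_comm]
      exact inf_eq_right.mpr (aux_smul_nonneg (hd0 l) (hpos l)) |>.symm ▸ by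
        simpa using inf_eq_left.mpr (aux_smul_nonneg (hd0 l) (hpos l))
    · rw [h]
      simpa using inf_eq_left.mpr (aux_smul_nonneg (hc l) (hpos l))
  · exact aux_smul_inf_smul_zero (hd0 l) (hc k) (hpos l) (hpos k) (hdisj l k hlk)

lemma aux_series_inf {f : ℕ → X} (hpos : ∀ n, 0 ≤ f n)
    (hdisj : ∀ n m, n ≠ m → f n ⊓ f m = 0) {a : ℕ → ℝ} (ha : ∀ k, 0 ≤ a k)
    {n : ℕ} {K : ℝ} (hK : 0 ≤ K) (han : a n ≤ K) {g : X}
    (hsum : HasSum (fun k => a k • f k) g) : g ⊓ (K • f n) = a n • f n := by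
  have hS : Filter.Tendsto (fun m => (∑ k ∈ Finset.range m, a k • f k) ⊓ (K • f n))
      Filter.atTop (𝓝 (g ⊓ (K • f n))) :=
    (hsum.tendsto_sum_nat).inf_nhds tendsto_const_nhds
  have hEq : ∀ m, n < m → (∑ k ∈ Finset.range m, a k • f k) ⊓ (K • f n) = a n • f n := by
    intro m hm
    have hn : n ∈ Finset.range m := Finset.mem_range.mpr hm
    have hsplit : ∑ k ∈ Finset.range m, a k • f k
        = a n • f n + ∑ k ∈ (Finset.range m).erase n, a k • f k := by
      exact (Finset.add_sum_erase _ (fun k => a k • f k) hn).symm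
    have hR : (∑ k ∈ (Finset.range m).erase n, a k • f k) ⊓ (K • f n) = 0 := by
      refine aux_finsum_inf_zero (aux_smul_nonneg hK (hpos n))
        (fun k _ => aux_smul_nonneg (ha k) (hpos k)) ?_
      intro k hk
      exact aux_smul_inf_smul_zero (ha k) hK (hpos k) (hpos n)
        (hdisj k n (Finset.ne_of_mem_erase hk))
    rw [hsplit, aux_inf_eq_of_disjoint (aux_smul_nonneg (ha n) (hpos n))
      (Finset.sum_nonneg fun k _ => aux_smul_nonneg (ha k) (hpos k))
      (aux_smul_nonneg hK (hpos n)) hR]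
    exact inf_eq_left.mpr (aux_smul_le_smul han (hpos n))
  have hconst : Filter.Tendsto (fun m => (∑ k ∈ Finset.range m, a k • f k) ⊓ (K • f n))
      Filter.atTop (𝓝 (a n • f n)) := by
    apply Filter.Tendsto.congr' _ (tendsto_const_nhds (x := a n • f n))
    filter_upwards [Filter.eventually_gt_atTop n] with m hm
    exact (hEq m hm).symm
  exact tendsto_nhds_unique hS hconst

def auxZ (f : ℕ → X) : Set X :=
  {x | ∃ b : ℕ → ℝ, (∀ n, 0 ≤ b n) ∧ HasSum b 1 ∧ HasSum (fun n => b n • f n) x}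

lemma aux_summable_bf [CompleteSpace X] {f : ℕ → X} {b : ℕ → ℝ} (hb : ∀ n, 0 ≤ b n)
    (hsb : Summable b) {M' : ℝ} (hfb : ∀ n, ‖f n‖ ≤ M') :
    Summable (fun n => b n • f n) := by
  refine Summable.of_norm_bounded (hsb.mul_right M') ?_
  intro n
  rw [norm_smul, Real.norm_eq_abs, abs_of_nonneg (hb n)]
  exact mul_le_mul_of_nonneg_left (hfb n) (hb n)

lemma aux_Z_norm_le {f : ℕ → X} {M' : ℝ} (hfb : ∀ n, ‖f n‖ ≤ M') {x : X}
    (hx : x ∈ auxZ f) : ‖x‖ ≤ M' := by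
  obtain ⟨b, hb, hb1, hbf⟩ := hx
  have hM0 : 0 ≤ M' := (norm_nonneg (f 0)).trans (hfb 0)
  have hsn : Summable (fun n => ‖b n • f n‖) := by
    refine Summable.of_nonneg_of_le (fun n => norm_nonneg _) ?_ (hb1.summable.mul_right M')
    intro n
    rw [norm_smul, Real.norm_eq_abs, abs_of_nonneg (hb n)]
    exact mul_le_mul_of_nonneg_left (hfb n) (hb n)
  calc ‖x‖ = ‖∑' n, b n • f n‖ := by rw [hbf.tsum_eq]
    _ ≤ ∑' n, ‖b n • f n‖ := norm_tsum_le_tsum_norm hsn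
    _ ≤ ∑' n, b n * M' := by
        refine Summable.tsum_le_tsum ?_ hsn (hb1.summable.mul_right M')
        intro n
        rw [norm_smul, Real.norm_eq_abs, abs_of_nonneg (hb n)]
        exact mul_le_mul_of_nonneg_left (hfb n) (hb n)
    _ = (∑' n, b n) * M' := tsum_mul_right
    _ = M' := by rw [hb1.tsum_eq, one_mul]

lemma aux_Z_convex {f : ℕ → X} : Convex ℝ (auxZ f) := by
  rintro x ⟨bx, hbx, hbx1, hbxf⟩ y ⟨by', hby, hby1, hbyf⟩ s t hs ht hst
  refine ⟨fun n => s * bx n + t * by' n, ?_, ?_, ?_⟩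
  · intro n
    exact add_nonneg (mul_nonneg hs (hbx n)) (mul_nonneg ht (hby n))
  · have := (hbx1.mul_left s).add (hby1.mul_left t)
    simpa [hst] using this
  · have hx' : HasSum (fun n => s • (bx n • f n)) (s • x) := hbxf.const_smul s
    have hy' : HasSum (fun n => t • (by' n • f n)) (t • y) := hbyf.const_smul t
    have hsum2 := hx'.add hy'
    have he : (fun n => (s * bx n + t * by' n) • f n)
        = fun n => s • (bx n • f n) + t • (by' n • f n) := by
      funext n
      rw [add_smul, smul_smul, smul_smul]
    rw [he]
    exact hsum2

lemma aux_range_sub_Z {f : ℕ → X} : Set.range f ⊆ auxZ f := by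
  rintro _ ⟨n, rfl⟩
  refine ⟨fun k => if k = n then 1 else 0, fun k => by positivity, hasSum_ite_eq n 1, ?_⟩
  have h := hasSum_ite_eq n (f n)
  have he : ∀ k, (if k = n then f n else 0) = (if k = n then (1:ℝ) else 0) • f k := by
    intro k
    split
    · rename_i hk
      rw [hk, one_smul]
    · rw [zero_smul]
  rw [funext he] at h
  exact h

lemma aux_co_sub_Z {f : ℕ → X} : convexHull ℝ (Set.range f) ⊆ auxZ f :=
  convexHull_min aux_range_sub_Z aux_Z_convex

lemma aux_Z_approx [CompleteSpace X] {f : ℕ → X} {x : X}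
    (hx : x ∈ auxZ f) :
    ∃ s : ℕ → X, (∀ m, s m ∈ convexHull ℝ (Set.range f)) ∧
      Filter.Tendsto (fun m => ‖s m - x‖) Filter.atTop (𝓝 0) := by
  obtain ⟨b, hb, hb1, hbf⟩ := hx
  set σ : ℕ → ℝ := fun m => ∑ k ∈ Finset.range m, b k with hσ
  set S : ℕ → X := fun m => ∑ k ∈ Finset.range m, b k • f k with hS
  set s : ℕ → X := fun m => S m + (1 - σ m) • f 0 with hs
  have hσ1 : ∀ m, σ m ≤ 1 := by
    intro m
    exact (sum_le_hasSum (Finset.range m) (fun k _ => hb k) hb1)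
  refine ⟨s, ?_, ?_⟩
  · intro m
    have := Convex.sum_mem (t := Finset.range (m + 1))
      (w := fun k => if k < m then b k else 1 - σ m)
      (z := fun k => if k < m then f k else f 0)
      (convex_convexHull ℝ (Set.range f)) ?_ ?_ ?_
    · convert this using 1
      rw [hs, Finset.sum_range_succ]
      simp only [lt_irrefl, if_neg, ite_false]
      congr 1
      · rw [hS]
        refine Finset.sum_congr rfl ?_
        intro k hk
        rw [if_pos (Finset.mem_range.mp hk), if_pos (Finset.mem_range.mp hk)]
    · intro k _
      show 0 ≤ if k < m then b k else 1 - σ m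
      split
      · exact hb k
      · exact sub_nonneg.mpr (hσ1 m)
    · rw [Finset.sum_range_succ]
      simp only [lt_irrefl, ite_false]
      have : ∑ k ∈ Finset.range m, (if k < m then b k else 1 - σ m) = σ m := by
        refine Finset.sum_congr rfl ?_
        intro k hk
        rw [if_pos (Finset.mem_range.mp hk)]
      rw [this]
      ring
    · intro k _
      show (if k < m then f k else f 0) ∈ convexHull ℝ (Set.range f)
      split
      · exact subset_convexHull ℝ _ (Set.mem_range_self _)
      · exact subset_convexHull ℝ _ (Set.mem_range_self 0)
  · have h1 : Filter.Tendsto (fun m => S m - x) Filter.atTop (𝓝 0) := by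
      have := hbf.tendsto_sum_nat
      have := this.sub (tendsto_const_nhds (x := x))
      simpa using this
    have h2 : Filter.Tendsto (fun m => (1 - σ m)) Filter.atTop (𝓝 0) := by
      have := hb1.tendsto_sum_nat
      have := (tendsto_const_nhds (x := (1:ℝ))).sub this
      simpa using this
    have h3 : Filter.Tendsto (fun m => s m - x) Filter.atTop (𝓝 0) := by
      have := h1.add (h2.smul_const (f 0))
      simp only [zero_smul, add_zero] at this
      refine this.congr ?_
      intro m
      rw [hs]
      exact sub_add_eq_add_sub _ _ _
    simpa using h3.norm

lemma aux_Z_sub_AbsClosure [CompleteSpace X] {f : ℕ → X} {x : X}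
    (hx : x ∈ auxZ f) : x ∈ AbsSigmaSeqClosure (convexHull ℝ (Set.range f)) := by
  obtain ⟨s, hmem, hnorm⟩ := aux_Z_approx hx
  refine ⟨s, hmem, ?_⟩
  intro g _
  refine squeeze_zero_norm (fun m => ?_) (by simpa using hnorm.const_mul ‖g‖)
  calc ‖g |s m - x|‖ ≤ ‖g‖ * ‖|s m - x|‖ := g.le_opNorm _
    _ = ‖g‖ * ‖s m - x‖ := by rw [norm_abs_eq_norm]

lemma aux_Z_sub_OrderClosure [CompleteSpace X] {f : ℕ → X} {x : X}
    (hx : x ∈ auxZ f) : x ∈ OrderClosure (convexHull ℝ (Set.range f)) := by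
  obtain ⟨s, hmem, hnorm⟩ := aux_Z_approx hx
  have hext : ∀ k : ℕ, ∃ N, ∀ m, N ≤ m → ‖s m - x‖ < (1/2) ^ k := by
    intro k
    have := (Metric.tendsto_atTop.mp hnorm) ((1/2) ^ k) (by positivity)
    obtain ⟨N, hN⟩ := this
    refine ⟨N, fun m hm => ?_⟩
    have := hN m hm
    rw [Real.dist_eq, sub_zero, abs_of_nonneg (norm_nonneg _)] at this
    exact this
  choose N hN using hext
  let φ : ℕ → ℕ := fun k => Nat.rec (N 0) (fun k ih => max (N (k + 1)) (ih + 1)) k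
  have hφ : ∀ k, ‖s (φ k) - x‖ ≤ (1/2) ^ k := by
    intro k
    cases k with
    | zero => exact (hN 0 _ le_rfl).le
    | succ k => exact (hN (k+1) _ (le_max_left _ _)).le
  set t : ℕ → X := fun k => |s (φ k) - x| with ht
  have htnn : ∀ k, 0 ≤ t k := fun k => abs_nonneg _
  have htb : ∀ k, ‖t k‖ ≤ (1/2) ^ k := by
    intro k
    rw [ht]
    simpa [norm_abs_eq_norm] using hφ k
  have hts : Summable t :=
    Summable.of_norm_bounded (summable_geometric_of_lt_one (by norm_num) (by norm_num)) htb
  have htshift : ∀ γ : ℕ, Summable (fun k => t (k + γ)) := by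
    intro γ
    exact (summable_nat_add_iff γ).mpr hts
  set h : ℕ → X := fun γ => ∑' k, t (k + γ) with hh
  have hstep : ∀ γ, h (γ + 1) ≤ h γ := by
    intro γ
    have e1 : h γ = t (0 + γ) + ∑' k, t (k + 1 + γ) := Summable.tsum_eq_zero_add (htshift γ)
    have e2 : (fun k => t (k + 1 + γ)) = fun k => t (k + (γ + 1)) := by
      funext k
      have hkk : k + 1 + γ = k + (γ + 1) := by omega
      rw [hkk]
    rw [e2] at e1
    rw [e1]
    exact le_add_of_nonneg_left (htnn _)
  have hanti : Antitone h := antitone_nat_of_succ_le hstep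
  have hnn : ∀ γ, 0 ≤ h γ := fun γ => tsum_nonneg (fun k => htnn _)
  have hgeo : Summable (fun k : ℕ => (1/2 : ℝ) ^ k) :=
    summable_geometric_of_lt_one (by norm_num) (by norm_num)
  have hnormh : ∀ γ, ‖h γ‖ ≤ 2 * (1/2) ^ γ := by
    intro γ
    have hsn : Summable (fun k => ‖t (k + γ)‖) := by
      refine Summable.of_nonneg_of_le (fun k => norm_nonneg _) (fun k => htb (k + γ)) ?_
      refine (hgeo.mul_right ((1/2) ^ γ)).congr ?_
      intro k
      rw [← pow_add]
    have h1 : ‖h γ‖ ≤ ∑' k, ‖t (k + γ)‖ := norm_tsum_le_tsum_norm hsn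
    have h2 : ∑' k, ‖t (k + γ)‖ ≤ ∑' k, (1/2 : ℝ) ^ k * (1/2) ^ γ := by
      refine Summable.tsum_le_tsum ?_ hsn (hgeo.mul_right _)
      intro k
      rw [← pow_add]
      exact htb (k + γ)
    have h3 : ∑' k, (1/2 : ℝ) ^ k * (1/2) ^ γ = 2 * (1/2) ^ γ := by
      rw [tsum_mul_right, tsum_geometric_of_lt_one (by norm_num) (by norm_num)]
      norm_num
    linarith
  have hglb : IsGLB (Set.range h) 0 := by
    constructor
    · rintro _ ⟨γ, rfl⟩
      exact hnn γ
    · intro u hu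
      refine aux_le_of_forall_eps ?_
      intro ε hε
      obtain ⟨γ, hγ⟩ : ∃ γ : ℕ, 2 * (1/2 : ℝ) ^ γ ≤ ε := by
        obtain ⟨γ, hγ⟩ := exists_pow_lt_of_lt_one (by positivity : (0:ℝ) < ε/2)
          (by norm_num : (1/2 : ℝ) < 1)
        exact ⟨γ, by linarith⟩
      exact ⟨h γ, by simpa using hu ⟨γ, rfl⟩, (hnormh γ).trans hγ⟩
  refine ⟨natDir, fun i => s (φ i), fun i => hmem (φ i),
    natDir, h, fun γ₁ γ₂ h12 => hanti h12, hglb, ?_⟩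
  show ∀ γ : ℕ, ∃ i₀ : ℕ, ∀ i : ℕ, i₀ ≤ i → |s (φ i) - x| ≤ h γ
  intro γ
  refine ⟨γ, fun i hi => ?_⟩
  have h4 := Summable.le_tsum (htshift γ) (i - γ) (fun k _ => htnn _)
  rwa [Nat.sub_add_cancel hi] at h4

lemma aux_Z_orderClosed [CompleteSpace X] {f : ℕ → X} {M M' : ℝ}
    (hpos : ∀ n, 0 ≤ f n) (hM' : ∀ n, ‖f n‖ ≤ M')
    (hdisj : ∀ n m, n ≠ m → f n ⊓ f m = 0) (hM : 0 < M)
    (hl1 : ∀ (m : ℕ) (a : ℕ → ℝ),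
      (1 / M) * ∑ k ∈ Finset.range m, |a k| ≤ ‖∑ k ∈ Finset.range m, a k • f k‖) :
    IsOrderClosed (auxZ f) := by
  rintro x ⟨D, g, hgZ, E, h, hanti, hglb, hdom⟩
  have hFne : (auxF D).NeBot := auxF_neBot D
  choose a ha hasum hafsum using hgZ
  have hfn_norm : ∀ n, 1 / M ≤ ‖f n‖ := by
    intro n
    have h1 := hl1 (n + 1) (fun k => if k = n then 1 else 0)
    have hn : n ∈ Finset.range (n + 1) := Finset.self_mem_range_succ n
    simp only [apply_ite abs, abs_one, abs_zero, ite_smul, one_smul, zero_smul,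
      Finset.sum_ite_eq' (Finset.range (n + 1)), if_pos hn] at h1
    simpa using h1
  have hh_nn : ∀ γ, 0 ≤ h γ := fun γ => hglb.1 ⟨γ, rfl⟩
  have hg_nn : ∀ i, 0 ≤ g i := by
    intro i
    rw [← (hafsum i).tsum_eq]
    exact tsum_nonneg fun n => aux_smul_nonneg (ha i n) (hpos n)
  have han_le_one : ∀ i n, a i n ≤ 1 :=
    fun i n => le_hasSum (hasum i) n (fun m _ => ha i m)
  have hdomE : ∀ γ, ∀ᶠ i in auxF D, |g i - x| ≤ h γ :=
    fun γ => auxF_eventually.mpr (hdom γ)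
  have hx_le : ∀ i γ, |g i - x| ≤ h γ → x ≤ g i + h γ := by
    intro i γ hi
    have h1 : x - g i ≤ |g i - x| := by
      rw [abs_sub_comm]
      exact le_abs_self _
    exact sub_le_iff_le_add'.mp (h1.trans hi)
  have hginf : ∀ i n (K : ℝ), 1 ≤ K → g i ⊓ (K • f n) = a i n • f n := by
    intro i n K hK
    exact aux_series_inf hpos hdisj (ha i) (zero_le_one.trans hK)
      ((han_le_one i n).trans hK) (hafsum i)
  -- scalar limits
  have hlim : ∀ n, ∃ L, Filter.Tendsto (fun i => a i n) (auxF D) (𝓝 L) := by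
    intro n
    apply aux_net_limit
    intro ε hε
    by_contra hcon
    push_neg at hcon
    have key : ∀ γ, (ε / 2) • f n ≤ h γ := by
      intro γ
      obtain ⟨i₀, hi₀⟩ := hdom γ
      obtain ⟨i, j, hri, hrj, hij⟩ := hcon i₀
      have hgi := hginf i n 1 le_rfl
      have hgj := hginf j n 1 le_rfl
      have hd1 : |a i n • f n - a j n • f n| ≤ |g i - g j| := by
        rw [← hgi, ← hgj]
        exact abs_inf_sub_inf_le_abs _ _ _
      have hd2 : |g i - g j| ≤ h γ + h γ := by
        have e1 : g i - g j = (g i - x) + -(g j - x) := by abel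
        rw [e1]
        refine (abs_add_le _ _).trans ?_
        rw [abs_neg]
        exact add_le_add (hi₀ i hri) (hi₀ j hrj)
      have hd3 : |a i n - a j n| • f n = |a i n • f n - a j n • f n| := by
        rw [← sub_smul, aux_abs_smul_of_nonneg _ (hpos n)]
      have hd4 : ε • f n ≤ h γ + h γ := by
        refine le_trans ?_ (hd1.trans hd2)
        rw [← hd3]
        exact aux_smul_le_smul hij (hpos n)
      have h12 := aux_smul_le_smul_left (c := (1/2 : ℝ)) (by norm_num) hd4
      rw [smul_add, smul_smul] at h12
      have e2 : (1/2 : ℝ) • h γ + (1/2 : ℝ) • h γ = h γ := by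
        rw [← add_smul]
        norm_num
      rw [e2] at h12
      have e3 : (1/2 : ℝ) * ε = ε / 2 := by ring
      rwa [e3] at h12
    have hle0 := aux_le_of_glb hglb key
    have hf0 : f n ≤ 0 := by
      have h5 := aux_smul_le_smul_left (c := 2 / ε) (by positivity) hle0
      rw [smul_smul, smul_zero] at h5
      have he : 2 / ε * (ε / 2) = 1 := by field_simp
      rw [he, one_smul] at h5
      exact h5
    have hfn0 : f n = 0 := le_antisymm hf0 (hpos n)
    have h6 := hfn_norm n
    rw [hfn0, norm_zero] at h6
    have : (0:ℝ) < 1 / M := by positivity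
    linarith
  choose b hb using hlim
  have hb_nn : ∀ n, 0 ≤ b n :=
    fun n => ge_of_tendsto (hb n) (Filter.Eventually.of_forall fun i => ha i n)
  have hpsum : ∀ m, Filter.Tendsto (fun i => ∑ k ∈ Finset.range m, a i k) (auxF D)
      (𝓝 (∑ k ∈ Finset.range m, b k)) :=
    fun m => tendsto_finset_sum _ (fun k _ => hb k)
  have hσ_le : ∀ m, ∑ k ∈ Finset.range m, b k ≤ 1 := by
    intro m
    refine le_of_tendsto (hpsum m) (Filter.Eventually.of_forall fun i => ?_)
    exact sum_le_hasSum _ (fun k _ => ha i k) (hasum i)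
  have hbsummable : Summable b := summable_of_sum_range_le hb_nn hσ_le
  -- key identity
  have hkey : ∀ (K : ℝ), 1 ≤ K → ∀ n, x ⊓ (K • f n) = b n • f n := by
    intro K hK n
    have habs : ∀ γ, |x ⊓ (K • f n) - b n • f n| ≤ h γ := by
      intro γ
      refine aux_le_of_forall_eps ?_
      intro ε hε
      have hev2 : ∀ᶠ i in auxF D, ‖a i n • f n - b n • f n‖ ≤ ε := by
        have h7 := (hb n).smul_const (f n)
        have h8 := Metric.tendsto_nhds.mp h7 ε hε
        filter_upwards [h8] with i hi
        rw [dist_eq_norm] at hi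
        exact hi.le
      obtain ⟨i, h1, h2⟩ := ((hdomE γ).and hev2).exists
      refine ⟨|a i n • f n - b n • f n|, ?_, by rwa [norm_abs_eq_norm]⟩
      have tri : |x ⊓ (K • f n) - b n • f n|
          ≤ |x ⊓ (K • f n) - g i ⊓ (K • f n)| + |g i ⊓ (K • f n) - b n • f n| := by
        have e := abs_add_le (x ⊓ (K • f n) - g i ⊓ (K • f n)) (g i ⊓ (K • f n) - b n • f n)
        simpa using e
      calc |x ⊓ (K • f n) - b n • f n|
          ≤ |x ⊓ (K • f n) - g i ⊓ (K • f n)| + |g i ⊓ (K • f n) - b n • f n| := tri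
        _ ≤ |x - g i| + |a i n • f n - b n • f n| := by
            refine add_le_add (abs_inf_sub_inf_le_abs _ _ _) ?_
            rw [hginf i n K hK]
        _ ≤ h γ + |a i n • f n - b n • f n| := by
            rw [abs_sub_comm]
            exact add_le_add_left h1 _
    have h9 := aux_le_of_glb hglb habs
    have hv1 : x ⊓ (K • f n) - b n • f n ≤ 0 := (le_abs_self _).trans h9
    have hv2 : 0 ≤ x ⊓ (K • f n) - b n • f n := by
      have h9' : |b n • f n - x ⊓ (K • f n)| ≤ 0 := by rwa [abs_sub_comm] at h9
      have := (le_abs_self (b n • f n - x ⊓ (K • f n))).trans h9'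
      exact sub_nonneg.mpr (sub_nonpos.mp this)
    exact sub_eq_zero.mp (le_antisymm hv1 hv2)
  -- the candidate components
  set y : ℕ → X := fun n => b n • f n with hy
  have hy_nn : ∀ n, 0 ≤ y n := fun n => aux_smul_nonneg (hb_nn n) (hpos n)
  have hy_eq : ∀ n, x ⊓ ((1:ℝ) • f n) = y n := fun n => hkey 1 le_rfl n
  have hy_le_x : ∀ n, y n ≤ x := by
    intro n
    rw [← hy_eq n]
    exact inf_le_left
  have hy_le_fn : ∀ n, y n ≤ f n := by
    intro n
    rw [← hy_eq n]
    exact inf_le_right.trans (by rw [one_smul])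
  have hy_disj : ∀ n m, n ≠ m → y n ⊓ y m = 0 := fun n m hnm =>
    aux_smul_inf_smul_zero (hb_nn n) (hb_nn m) (hpos n) (hpos m) (hdisj n m hnm)
  set S' : ℕ → X := fun m => ∑ k ∈ Finset.range m, y k with hS'
  have hS'_le : ∀ m, S' m ≤ x := fun m => aux_sum_disj_le hy_nn hy_le_x hy_disj m
  set r : ℕ → X := fun m => x - S' m with hr
  have hr_nn : ∀ m, 0 ≤ r m := fun m => sub_nonneg.mpr (hS'_le m)
  have hr_anti : ∀ m m', m ≤ m' → r m' ≤ r m := by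
    intro m m' hmm'
    refine sub_le_sub_left ?_ x
    exact Finset.sum_le_sum_of_subset_of_nonneg
      (Finset.range_subset_range.mpr hmm') (fun k _ _ => hy_nn k)
  have hxy_fn : ∀ n, (x - y n) ⊓ f n = 0 := by
    intro n
    have h2 : x ⊓ ((2:ℝ) • f n) = y n := hkey 2 one_le_two n
    have e : (x + -(y n)) ⊓ ((2:ℝ) • f n + -(y n)) = x ⊓ ((2:ℝ) • f n) + -(y n) :=
      ((OrderIso.addRight (-(y n))).map_inf x ((2:ℝ) • f n)).symm
    have hfle : f n ≤ (2:ℝ) • f n - y n := by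
      have h3 : (2:ℝ) • f n - f n ≤ (2:ℝ) • f n - y n := sub_le_sub_left (hy_le_fn n) _
      have h4 : (2:ℝ) • f n - f n = f n := by
        rw [two_smul]
        abel
      rwa [h4] at h3
    have h5 : (x - y n) ⊓ f n ≤ 0 := by
      calc (x - y n) ⊓ f n ≤ (x - y n) ⊓ ((2:ℝ) • f n - y n) := inf_le_inf_left _ hfle
        _ = x ⊓ ((2:ℝ) • f n) - y n := by
            rw [sub_eq_add_neg, sub_eq_add_neg, e, ← sub_eq_add_neg]
        _ = 0 := by rw [h2, sub_self]
    exact le_antisymm h5 (le_inf (sub_nonneg.mpr (hy_le_x n)) (hpos n))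
  have hr_fk : ∀ m k, k < m → r m ⊓ f k = 0 := by
    intro m k hkm
    have h1 : r m ≤ x - y k := by
      have h2 : y k ≤ S' m :=
        Finset.single_le_sum (fun n _ => hy_nn n) (Finset.mem_range.mpr hkm)
      exact sub_le_sub_left h2 x
    exact le_antisymm (le_trans (inf_le_inf_right _ h1) (hxy_fn k).le)
      (le_inf (hr_nn m) (hpos k))
  -- domination of remainders by approximant tails
  have hC : ∀ γ (i : D.ι), |g i - x| ≤ h γ → ∀ m,
      r m ≤ (g i - ∑ k ∈ Finset.range m, a i k • f k) + h γ := by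
    intro γ i hi m
    set T := g i - ∑ k ∈ Finset.range m, a i k • f k with hT
    have hT_nn : 0 ≤ T := by
      rw [hT, sub_nonneg, ← (hafsum i).tsum_eq]
      exact Summable.sum_le_tsum (Finset.range m) (fun k _ => aux_smul_nonneg (ha i k) (hpos k))
        (hafsum i).summable
    have hrx : r m ≤ g i + h γ := (sub_le_self x (Finset.sum_nonneg fun k _ => hy_nn k)).trans
      (hx_le i γ hi)
    have h1 : r m = r m ⊓ (g i + h γ) := (inf_eq_left.mpr hrx).symm
    have h2 : r m ⊓ (g i + h γ) ≤ r m ⊓ g i + r m ⊓ h γ := by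
      rw [inf_comm (r m) (g i + h γ), inf_comm (r m) (g i), inf_comm (r m) (h γ)]
      exact aux_inf_add_le (hg_nn i) (hh_nn γ) (hr_nn m)
    have h4 : r m ⊓ g i ≤ T := by
      have hgdecomp : g i = (∑ k ∈ Finset.range m, a i k • f k) + T := by
        rw [hT]
        abel
      have h5 : (∑ k ∈ Finset.range m, a i k • f k) ⊓ r m = 0 := by
        refine aux_finsum_inf_zero (hr_nn m)
          (fun k _ => aux_smul_nonneg (ha i k) (hpos k)) ?_
        intro k hk
        rw [inf_comm]
        exact aux_inf_smul_zero (ha i k) (hr_nn m) (hpos k)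
          (hr_fk m k (Finset.mem_range.mp hk))
      calc r m ⊓ g i = ((∑ k ∈ Finset.range m, a i k • f k) + T) ⊓ r m := by
            rw [← hgdecomp, inf_comm]
        _ ≤ (∑ k ∈ Finset.range m, a i k • f k) ⊓ r m + T ⊓ r m :=
            aux_inf_add_le (Finset.sum_nonneg fun k _ => aux_smul_nonneg (ha i k) (hpos k))
              hT_nn (hr_nn m)
        _ = T ⊓ r m := by rw [h5, zero_add]
        _ ≤ T := inf_le_left
    calc r m = r m ⊓ (g i + h γ) := h1
      _ ≤ r m ⊓ g i + r m ⊓ h γ := h2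
      _ ≤ T + h γ := add_le_add h4 inf_le_right
  have hTnorm : ∀ (i : D.ι), Filter.Tendsto
      (fun m => ‖g i - ∑ k ∈ Finset.range m, a i k • f k‖) Filter.atTop (𝓝 0) := by
    intro i
    have h1 := (tendsto_const_nhds (x := g i)).sub (hafsum i).tendsto_sum_nat
    simpa using h1.norm
  have hrglb : IsGLB (Set.range r) 0 := by
    constructor
    · rintro _ ⟨m, rfl⟩
      exact hr_nn m
    · intro u hu
      have hhouseholds : ∀ γ, u ≤ h γ := by
        intro γ
        obtain ⟨i, hi⟩ := (hdomE γ).exists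
        refine aux_le_of_forall_eps ?_
        intro ε hε
        obtain ⟨m₀, hm₀⟩ := Metric.tendsto_atTop.mp (hTnorm i) ε hε
        have hd := hm₀ m₀ le_rfl
        rw [Real.dist_eq, sub_zero, abs_of_nonneg (norm_nonneg _)] at hd
        refine ⟨g i - ∑ k ∈ Finset.range m₀, a i k • f k, ?_, hd.le⟩
        have := (hu ⟨m₀, rfl⟩).trans (hC γ i hi m₀)
        rw [add_comm] at this
        exact this
      exact aux_le_of_glb hglb hhouseholds
  -- total mass of b is 1
  have hσ_tsum : ∀ m, ∑ k ∈ Finset.range m, b k ≤ ∑' n, b n :=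
    fun m => Summable.sum_le_tsum (Finset.range m) (fun k _ => hb_nn k) hbsummable
  have hbsum1 : HasSum b 1 := by
    have hσle : ∑' n, b n ≤ 1 := Summable.tsum_le_of_sum_range_le hbsummable hσ_le
    rcases eq_or_lt_of_le hσle with heq | hlt
    · rw [← heq]
      exact hbsummable.hasSum
    exfalso
    set δ := 1 - ∑' n, b n with hδdef
    have hδpos : 0 < δ := by rw [hδdef]; linarith
    obtain ⟨γ0⟩ := E.nonempty
    set v := x + h γ0 with hv
    have step_ex : ∀ m : ℕ, ∃ (m' : ℕ) (c : ℕ → ℝ), m < m' ∧ (∀ k, 0 ≤ c k) ∧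
        (∀ k, c k ≠ 0 → m ≤ k ∧ k < m') ∧ δ / 4 ≤ ∑ k ∈ Finset.range m', c k ∧
        ∑ k ∈ Finset.range m', c k • f k ≤ v := by
      intro m
      have hev2 : ∀ᶠ i in auxF D,
          ∑ k ∈ Finset.range m, a i k ≤ (∑' n, b n) + δ / 4 := by
        have h7 := Metric.tendsto_nhds.mp (hpsum m) (δ / 4) (by linarith)
        filter_upwards [h7] with i hi
        rw [Real.dist_eq] at hi
        have h8 := (le_abs_self _).trans hi.le
        have h9 := hσ_tsum m
        linarith
      obtain ⟨i, h1, h2⟩ := ((hdomE γ0).and hev2).exists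
      have h3 : ∃ m', m < m' ∧ 1 - δ / 4 ≤ ∑ k ∈ Finset.range m', a i k := by
        have h9 := Metric.tendsto_nhds.mp (hasum i).tendsto_sum_nat (δ / 4) (by linarith)
        obtain ⟨m₁, hm₁⟩ := Filter.eventually_atTop.mp h9
        refine ⟨max m₁ (m + 1), lt_of_lt_of_le (Nat.lt_succ_self m) (le_max_right _ _), ?_⟩
        have h10 := hm₁ (max m₁ (m + 1)) (le_max_left _ _)
        rw [Real.dist_eq] at h10
        have h11 : 1 - ∑ k ∈ Finset.range (max m₁ (m + 1)), a i k
            ≤ |∑ k ∈ Finset.range (max m₁ (m + 1)), a i k - 1| := by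
          rw [abs_sub_comm]
          exact le_abs_self _
        linarith
      obtain ⟨m', hmm', hm'⟩ := h3
      have hico_sub : Finset.Ico m m' ⊆ Finset.range m' := by
        intro k hk
        exact Finset.mem_range.mpr (Finset.mem_Ico.mp hk).2
      refine ⟨m', fun k => if k ∈ Finset.Ico m m' then a i k else 0, hmm', ?_, ?_, ?_, ?_⟩
      · intro k
        show 0 ≤ if k ∈ Finset.Ico m m' then a i k else 0
        split
        · exact ha i k
        · exact le_rfl
      · intro k hk
        have hk' : (if k ∈ Finset.Ico m m' then a i k else 0) ≠ 0 := hk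
        by_cases hmem : k ∈ Finset.Ico m m'
        · exact Finset.mem_Ico.mp hmem
        · rw [if_neg hmem] at hk'
          exact absurd rfl hk' 
      · have e1 : ∑ k ∈ Finset.range m', (if k ∈ Finset.Ico m m' then a i k else 0)
            = ∑ k ∈ Finset.Ico m m', a i k := by
          rw [Finset.sum_ite_mem, Finset.inter_eq_right.mpr hico_sub]
        rw [e1, Finset.sum_Ico_eq_sub _ hmm'.le]
        have h12 := hm'
        linarith
      · have e2 : ∑ k ∈ Finset.range m', (if k ∈ Finset.Ico m m' then a i k else 0) • f k
            = ∑ k ∈ Finset.Ico m m', a i k • f k := by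
          have e3 : ∀ k, (if k ∈ Finset.Ico m m' then a i k else 0) • f k
              = if k ∈ Finset.Ico m m' then a i k • f k else 0 := by
            intro k
            split <;> simp
          rw [Finset.sum_congr rfl (fun k _ => e3 k), Finset.sum_ite_mem,
            Finset.inter_eq_right.mpr hico_sub]
        rw [e2]
        have h13 : ∑ k ∈ Finset.Ico m m', a i k • f k ≤ g i := by
          rw [← (hafsum i).tsum_eq]
          exact Summable.sum_le_tsum _ (fun k _ => aux_smul_nonneg (ha i k) (hpos k))
            (hafsum i).summable
        refine h13.trans ?_
        rw [hv]
        exact sub_le_iff_le_add'.mp ((le_abs_self _).trans h1)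
    choose stepm stepc hstep1 hstep2 hstep3 hstep4 hstep5 using step_ex
    set mseq : ℕ → ℕ := fun j => Nat.rec 0 (fun _ prev => stepm prev) j with hmseq
    have hmseq_succ : ∀ j, mseq (j + 1) = stepm (mseq j) := fun j => rfl
    set cs : ℕ → ℕ → ℝ := fun j => stepc (mseq j) with hcs
    have hmono : StrictMono mseq :=
      strictMono_nat_of_lt_succ (fun j => hstep1 (mseq j))
    set W : ℕ → X := fun j => ∑ k ∈ Finset.range (mseq (j + 1)), cs j k • f k with hW
    have hW_nn : ∀ j, 0 ≤ W j :=
      fun j => Finset.sum_nonneg fun k _ => aux_smul_nonneg (hstep2 _ k) (hpos k)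
    have hW_le_v : ∀ j, W j ≤ v := fun j => hstep5 (mseq j)
    have hsupp : ∀ j k, cs j k ≠ 0 → mseq j ≤ k ∧ k < mseq (j + 1) :=
      fun j k hk => hstep3 (mseq j) k hk
    have hWdisj : ∀ j l, j ≠ l → W j ⊓ W l = 0 := by
      intro j l hjl
      refine aux_blocks_disjoint hpos hdisj (hstep2 _) (hstep2 _) ?_ _ _
      intro k
      by_contra hcon
      push_neg at hcon
      obtain ⟨hc1, hc2⟩ := hcon
      obtain ⟨hj1, hj2⟩ := hsupp j k hc1
      obtain ⟨hl1, hl2⟩ := hsupp l k hc2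
      rcases lt_or_gt_of_ne hjl with hlt | hgt
      · have : mseq (j + 1) ≤ mseq l := hmono.monotone (Nat.succ_le_of_lt hlt)
        omega
      · have : mseq (l + 1) ≤ mseq j := hmono.monotone (Nat.succ_le_of_lt hgt)
        omega
    obtain ⟨N, hN⟩ := exists_nat_gt (M * ‖v‖ / (δ / 4))
    set K0 := mseq N with hK0
    set C : ℕ → ℝ := fun k => ∑ j ∈ Finset.range N, cs j k with hCdef
    have hC_nn : ∀ k, 0 ≤ C k := fun k => Finset.sum_nonneg fun j _ => hstep2 _ k
    have hext : ∀ j, j ∈ Finset.range N → ∀ (u : ℕ → X),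
        ∑ k ∈ Finset.range (mseq (j + 1)), (fun k => cs j k • u k) k
          = ∑ k ∈ Finset.range K0, cs j k • u k := by
      intro j hj u
      refine Finset.sum_subset ?_ ?_
      · exact Finset.range_subset_range.mpr (hmono.monotone (Nat.succ_le_of_lt (Finset.mem_range.mp hj)))
      · intro k _ hk
        have : cs j k = 0 := by
          by_contra hc
          exact hk (Finset.mem_range.mpr (hsupp j k hc).2)
        rw [this, zero_smul]
    have hWsum : ∑ k ∈ Finset.range K0, C k • f k = ∑ j ∈ Finset.range N, W j := by
      calc ∑ k ∈ Finset.range K0, C k • f k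
          = ∑ k ∈ Finset.range K0, ∑ j ∈ Finset.range N, cs j k • f k := by
            refine Finset.sum_congr rfl fun k _ => ?_
            rw [hCdef]
            exact Finset.sum_smul
        _ = ∑ j ∈ Finset.range N, ∑ k ∈ Finset.range K0, cs j k • f k := Finset.sum_comm
        _ = ∑ j ∈ Finset.range N, W j := by
            refine Finset.sum_congr rfl fun j hj => ?_
            exact (hext j hj f).symm
    have hmassj : ∀ j ∈ Finset.range N, δ / 4 ≤ ∑ k ∈ Finset.range K0, cs j k := by
      intro j hj
      have e4 : ∑ k ∈ Finset.range (mseq (j + 1)), cs j k = ∑ k ∈ Finset.range K0, cs j k := by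
        refine Finset.sum_subset ?_ ?_
        · exact Finset.range_subset_range.mpr (hmono.monotone (Nat.succ_le_of_lt (Finset.mem_range.mp hj)))
        · intro k _ hk
          by_contra hc
          exact hk (Finset.mem_range.mpr (hsupp j k hc).2)
      rw [← e4]
      exact hstep4 (mseq j)
    have hCsum : (N : ℝ) * (δ / 4) ≤ ∑ k ∈ Finset.range K0, C k := by
      calc (N : ℝ) * (δ / 4) = ∑ _j ∈ Finset.range N, (δ / 4) := by
            rw [Finset.sum_const, Finset.card_range, nsmul_eq_mul]
        _ ≤ ∑ j ∈ Finset.range N, ∑ k ∈ Finset.range K0, cs j k := Finset.sum_le_sum hmassj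
        _ = ∑ k ∈ Finset.range K0, C k := Finset.sum_comm
    have hWle : ∑ j ∈ Finset.range N, W j ≤ v := aux_sum_disj_le hW_nn hW_le_v hWdisj N
    have hnorm1 : ‖∑ k ∈ Finset.range K0, C k • f k‖ ≤ ‖v‖ := by
      rw [hWsum]
      exact aux_norm_le_of_nonneg_le (Finset.sum_nonneg fun j _ => hW_nn j) hWle
    have hl1' := hl1 K0 C
    rw [Finset.sum_congr rfl (fun k _ => abs_of_nonneg (hC_nn k))] at hl1'
    have hfinal : 1 / M * ((N : ℝ) * (δ / 4)) ≤ ‖v‖ := by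
      refine le_trans ?_ (hl1'.trans hnorm1)
      exact mul_le_mul_of_nonneg_left hCsum (by positivity)
    rw [div_lt_iff₀ (by positivity : (0:ℝ) < δ / 4)] at hN
    have hQ : (N : ℝ) * (δ / 4) ≤ M * ‖v‖ := by
      have hq1 := mul_le_mul_of_nonneg_left hfinal (le_of_lt hM)
      rwa [← mul_assoc, mul_one_div_cancel (ne_of_gt hM), one_mul] at hq1
    exact absurd hQ (not_le.mpr hN)
  -- the limit element
  have hyf_summable : Summable y := aux_summable_bf hb_nn hbsummable hM'
  set z := ∑' n, y n with hzdef
  have hz : HasSum y z := hyf_summable.hasSum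
  have hzS : Filter.Tendsto (fun m => ‖z - S' m‖) Filter.atTop (𝓝 0) := by
    have h1 := (tendsto_const_nhds (x := z)).sub hz.tendsto_sum_nat
    rw [sub_self] at h1
    have h2 := h1.norm
    rw [norm_zero] at h2
    exact h2
  have hz_le_x : z ≤ x := by
    refine aux_le_of_forall_eps ?_
    intro ε hε
    obtain ⟨m₀, hm₀⟩ := Metric.tendsto_atTop.mp hzS ε hε
    have hd := hm₀ m₀ le_rfl
    rw [Real.dist_eq, sub_zero, abs_of_nonneg (norm_nonneg _)] at hd
    refine ⟨z - S' m₀, ?_, hd.le⟩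
    calc z = S' m₀ + (z - S' m₀) := by abel
      _ ≤ x + (z - S' m₀) := add_le_add_left (hS'_le m₀) _
  have hxz_lb : ∀ m, x - z ≤ r m := by
    intro m
    refine aux_le_of_forall_eps ?_
    intro ε hε
    obtain ⟨m₁, hm₁⟩ := Metric.tendsto_atTop.mp hzS ε hε
    have hd := hm₁ (max m m₁) (le_max_right _ _)
    rw [Real.dist_eq, sub_zero, abs_of_nonneg (norm_nonneg _)] at hd
    refine ⟨|z - S' (max m m₁)|, ?_, by rw [norm_abs_eq_norm]; exact hd.le⟩
    calc x - z = r (max m m₁) + (S' (max m m₁) - z) := by rw [hr]; exact (sub_add_sub_cancel _ _ _).symm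
      _ ≤ r m + |z - S' (max m m₁)| := by
          refine add_le_add (hr_anti m _ (le_max_left _ _)) ?_
          rw [abs_sub_comm]
          exact le_abs_self _
  have hxz : x = z := by
    have h1 : x - z ≤ 0 := hrglb.2 (by rintro w ⟨m, rfl⟩; exact hxz_lb m)
    have h2 : 0 ≤ x - z := sub_nonneg.mpr hz_le_x
    exact sub_eq_zero.mp (le_antisymm h1 h2)
  exact ⟨b, hb_nn, hbsum1, hxz ▸ hz⟩

end AuxLemmas

/-- if `X` has property `P4`, then for every norm bounded disjoint
positive `ℓ¹`-sequence, the order closure of the convex hull of `{fₙ}` equals its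
`|σ|(X, X_n^~)`-sequential closure. -/
theorem stmt15 {X : Type*} [NormedAddCommGroup X] [Lattice X] [HasSolidNorm X] [IsOrderedAddMonoid X] [NormedSpace ℝ X] [CompleteSpace X]
    (hP4 : PropP4 X)
    (f : ℕ → X) (hpos : ∀ n, 0 ≤ f n) (hbdd : ∃ M : ℝ, ∀ n, ‖f n‖ ≤ M)
    (hdisj : ∀ n m, n ≠ m → f n ⊓ f m = 0) (hl1 : IsL1Basic f) :
    OrderClosure (convexHull ℝ (Set.range f)) =
      AbsSigmaSeqClosure (convexHull ℝ (Set.range f)) := by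
  obtain ⟨M, hM, hl1'⟩ := hl1
  obtain ⟨M', hM'⟩ := hbdd
  have hZclosed : IsOrderClosed (auxZ f) := aux_Z_orderClosed hpos hM' hdisj hM hl1'
  have hco : convexHull ℝ (Set.range f) ⊆ auxZ f := aux_co_sub_Z
  apply Set.Subset.antisymm
  · rintro x ⟨D, g, hg, hconv⟩
    have hxZ : x ∈ auxZ f := hZclosed ⟨D, g, fun i => hco (hg i), hconv⟩
    exact aux_Z_sub_AbsClosure hxZ
  · rintro x ⟨s, hs, hlim⟩
    have hxZ : x ∈ auxZ f := by
      refine hP4 (auxZ f) aux_Z_convex ⟨max M' 0, ?_⟩ hZclosed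
        ⟨s, fun n => hco (hs n), hlim⟩
      intro w hw
      exact aux_Z_norm_le (fun n => (hM' n).trans (le_max_left _ _)) hw
    exact aux_Z_sub_OrderClosure hxZ
end
end
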